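/- arXiv:1011.6139 — 7 statements merged into one kernel-verified Lean document; each statement's English description precedes it below -/
import Mathlib

section
/- For real numbers λ, λ' with 1/2 < λ, λ' < 1 and real numbers 0 < z < y, one has ∫₀^z u^{1-λ-λ'} (y-u)^{λ-3/2} (z-u)^{λ'-3/2} du = z^{1/2-λ} y^{1/2-λ'} (y-z)^{λ+λ'-2} B(2-λ-λ', λ'-1/2), where B denotes the Beta function. -/
open MeasureTheory Set

/-- The Euler Beta function `B(a,b) = ∫₀¹ t^{a-1}(1-t)^{b-1} dt`. -/
noncomputable def Beta (a b : ℝ) : ℝ := ∫ t in Set.Ioo (0:ℝ) 1, t ^ (a - 1) * (1 - t) ^ (b - 1)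

/-! The Möbius substitution `t = (y - z) u / (z (y - u))`, which sends `0, z, y` to `0, 1, ∞`,
maps `(0, z)` onto `(0, 1)` and turns `u^{a-1} (y-u)^{-(a+b)} (z-u)^{b-1} du` into a constant
multiple of the Beta kernel `t^{a-1} (1-t)^{b-1} dt`. -/

noncomputable def betaSubst (y z u : ℝ) : ℝ := (y - z) * u / (z * (y - u))

section BetaSubst

variable {y z u : ℝ}

lemma one_sub_betaSubst (hz : z ≠ 0) (hu : y - u ≠ 0) :
    1 - betaSubst y z u = y * (z - u) / (z * (y - u)) := by
  unfold betaSubst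
  field_simp
  ring

lemma hasDerivAt_betaSubst (hz : z ≠ 0) (hu : y - u ≠ 0) :
    HasDerivAt (betaSubst y z) ((y - z) * y / (z * (y - u) ^ 2)) u := by
  have hnum : HasDerivAt (fun u : ℝ => (y - z) * u) (y - z) u := by
    simpa using (hasDerivAt_id u).const_mul (y - z)
  have hden : HasDerivAt (fun u : ℝ => z * (y - u)) (-z) u := by
    simpa using ((hasDerivAt_id u).const_sub y).const_mul z
  refine (hnum.div hden (mul_ne_zero hz hu)).congr_deriv ?_
  field_simp
  ring

lemma injOn_betaSubst (hy : y ≠ 0) (hz : z ≠ 0) (hyz : y - z ≠ 0) :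
    InjOn (betaSubst y z) {y}ᶜ := by
  intro u₁ hu₁ u₂ hu₂ h
  have h₁ : y - u₁ ≠ 0 := sub_ne_zero.2 (Ne.symm hu₁)
  have h₂ : y - u₂ ≠ 0 := sub_ne_zero.2 (Ne.symm hu₂)
  unfold betaSubst at h
  rw [div_eq_div_iff (mul_ne_zero hz h₁) (mul_ne_zero hz h₂)] at h
  have h' : ((y - z) * z * y) * (u₁ - u₂) = 0 := by linear_combination h
  simpa [sub_eq_zero, hy, hz, hyz] using h'

lemma image_betaSubst_Ioo (hz : 0 < z) (hzy : z < y) :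
    betaSubst y z '' Ioo 0 z = Ioo 0 1 := by
  have hyz : 0 < y - z := sub_pos.2 hzy
  ext t
  constructor
  · rintro ⟨u, ⟨hu0, huz⟩, rfl⟩
    have hyu : 0 < y - u := by linarith
    refine ⟨div_pos (mul_pos hyz hu0) (mul_pos hz hyu), ?_⟩
    rw [betaSubst, div_lt_one (mul_pos hz hyu)]
    nlinarith
  · rintro ⟨ht0, ht1⟩
    have hD : 0 < y - z + t * z := by nlinarith
    have hyu : y - t * z * y / (y - z + t * z) = y * (y - z) / (y - z + t * z) := by
      field_simp
      ring
    refine ⟨t * z * y / (y - z + t * z), ⟨div_pos (mul_pos (mul_pos ht0 hz) (hz.trans hzy)) hD, ?_⟩, ?_⟩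
    · rw [div_lt_iff₀ hD]
      nlinarith [mul_pos (mul_pos hz (sub_pos.2 ht1)) hyz]
    · rw [betaSubst, hyu]
      field_simp [(hz.trans hzy).ne']

lemma betaSubst_jacobian_mul_betaKernel (a b : ℝ) (hu : 0 < u) (huz : u < z) (hzy : z < y) :
    (y - z) * y / (z * (y - u) ^ 2) *
        (betaSubst y z u ^ (a - 1) * (1 - betaSubst y z u) ^ (b - 1)) =
      z ^ (1 - a - b) * y ^ b * (y - z) ^ a *
        (u ^ (a - 1) * (y - u) ^ (-(a + b)) * (z - u) ^ (b - 1)) := by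
  have hz : 0 < z := hu.trans huz
  have hy : 0 < y := hz.trans hzy
  have hyz : 0 < y - z := sub_pos.2 hzy
  have hyu : 0 < y - u := by linarith
  have hzu : 0 < z - u := sub_pos.2 huz
  rw [one_sub_betaSubst hz.ne' hyu.ne', betaSubst, Real.div_rpow (by positivity) (by positivity),
    Real.div_rpow (by positivity) (by positivity), Real.mul_rpow hyz.le hu.le,
    Real.mul_rpow hz.le hyu.le, Real.mul_rpow hy.le hzu.le, Real.mul_rpow hz.le hyu.le]
  simp only [Real.rpow_sub hz, Real.rpow_sub hy, Real.rpow_sub hyz, Real.rpow_sub hu,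
    Real.rpow_sub hyu, Real.rpow_sub hzu, Real.rpow_neg hyu.le, Real.rpow_add hyu, Real.rpow_one]
  field_simp

end BetaSubst

theorem integral_rpow_mul_rpow_mul_rpow_eq_beta (a b : ℝ) {y z : ℝ} (hz : 0 < z) (hzy : z < y) :
    ∫ u in Ioo (0 : ℝ) z, u ^ (a - 1) * (y - u) ^ (-(a + b)) * (z - u) ^ (b - 1) =
      z ^ (a + b - 1) * y ^ (-b) * (y - z) ^ (-a) * Beta a b := by
  have hy : 0 < y := hz.trans hzy
  have hyz : 0 < y - z := sub_pos.2 hzy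
  have hderiv : ∀ u ∈ Ioo 0 z,
      HasDerivWithinAt (betaSubst y z) ((y - z) * y / (z * (y - u) ^ 2)) (Ioo 0 z) u :=
    fun u hu => (hasDerivAt_betaSubst hz.ne' (by linarith [hu.2])).hasDerivWithinAt
  have hinj : InjOn (betaSubst y z) (Ioo 0 z) :=
    (injOn_betaSubst hy.ne' hz.ne' hyz.ne').mono fun u hu => ne_of_lt (hu.2.trans hzy)
  have hcov := integral_image_eq_integral_abs_deriv_smul measurableSet_Ioo hderiv hinj
    fun t => t ^ (a - 1) * (1 - t) ^ (b - 1)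
  rw [image_betaSubst_Ioo hz hzy] at hcov
  have hjac : EqOn
      (fun u => |(y - z) * y / (z * (y - u) ^ 2)| •
        (betaSubst y z u ^ (a - 1) * (1 - betaSubst y z u) ^ (b - 1)))
      (fun u => z ^ (1 - a - b) * y ^ b * (y - z) ^ a *
        (u ^ (a - 1) * (y - u) ^ (-(a + b)) * (z - u) ^ (b - 1))) (Ioo 0 z) := by
    intro u ⟨hu, huz⟩
    dsimp only
    have hyu : 0 < y - u := by linarith
    rw [smul_eq_mul, abs_of_pos (by positivity)]
    exact betaSubst_jacobian_mul_betaKernel a b hu huz hzy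
  rw [setIntegral_congr_fun measurableSet_Ioo hjac, integral_const_mul] at hcov
  rw [Beta, hcov, ← mul_assoc, Real.rpow_neg hy.le, Real.rpow_neg hyz.le,
    show a + b - 1 = -(1 - a - b) by ring, Real.rpow_neg hz.le]
  field_simp

theorem stmt0_general (lam lam' y z : ℝ) (hz : 0 < z) (hzy : z < y) :
    ∫ u in Set.Ioo (0:ℝ) z,
        u ^ (1 - lam - lam') * (y - u) ^ (lam - 3/2) * (z - u) ^ (lam' - 3/2)
      = z ^ (1/2 - lam) * y ^ (1/2 - lam') * (y - z) ^ (lam + lam' - 2) *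
        Beta (2 - lam - lam') (lam' - 1/2) := by
  convert integral_rpow_mul_rpow_mul_rpow_eq_beta (2 - lam - lam') (lam' - 1/2) hz hzy
    using 5 <;> ring_nf

theorem stmt0 (lam lam' y z : ℝ) (h1 : 1/2 < lam) (h2 : lam < 1)
    (h3 : 1/2 < lam') (h4 : lam' < 1) (hz : 0 < z) (hzy : z < y) :
    ∫ u in Set.Ioo (0:ℝ) z,
        u ^ (1 - lam - lam') * (y - u) ^ (lam - 3/2) * (z - u) ^ (lam' - 3/2)
      = z ^ (1/2 - lam) * y ^ (1/2 - lam') * (y - z) ^ (lam + lam' - 2) *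
        Beta (2 - lam - lam') (lam' - 1/2) :=
  stmt0_general lam lam' y z hz hzy
end

section
/- Fix 1/2 < a < b < 1 and T > 0. Define K_λ(t,s) = s^{1/2-λ} ∫_s^t (y-s)^{λ-3/2} y^{λ-1/2} dy for 0 < s < t ≤ T and λ ∈ [a,b]. Then there exists a constant C > 0 (depending on a, b, T) such that for all λ ∈ [a,b], all t ∈ (0,T], and all s ∈ (0, t), |∂K_λ(t,s)/∂λ| ≤ C (1 ∨ |log s|) s^{1/2-b}. -/
open MeasureTheory Set

/-- The Volterra kernel of fractional Brownian motion with Hurst parameter `H > 1/2`: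
`K_H(t,s) = s^{1/2-H} ∫_s^t (y-s)^{H-3/2} y^{H-1/2} dy`. -/
noncomputable def K (H t s : ℝ) : ℝ :=
  s ^ (1/2 - H) * ∫ y in Set.Ioo s t, (y - s) ^ (H - 3/2) * y ^ (H - 1/2)

/-!
Differentiating under the integral sign gives
`∂_H K_H(t,s) = s^{1/2-H} (∫_s^t (log (y-s) + log y) F_H(y) dy - log s ∫_s^t F_H(y) dy)`
with `F_H(y) = (y-s)^{H-3/2} y^{H-1/2}`. For `M = max 1 T` and `1/2 + 2ε ≤ H ≤ 3/2` we have
`F_H(y) ≤ M² (y-s)^{2ε-1}`, `|log y| ≤ log M + |log s|` and `|log (y-s)| ≤ log M + (y-s)^{-ε}/ε`: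
the logarithms cost only `ε` of the exponent, so all majorants stay integrable at `y = s` and
both integrals are `O(max 1 |log s|)` uniformly in `s, t, H`. Finally `s^{1/2-λ} ≤ M s^{1/2-b}`.
-/
open Real Filter

lemma rpow_le_of_le_of_one_le {x e M : ℝ} (hx : 0 ≤ x) (hxM : x ≤ M) (hM : 1 ≤ M)
    (he₀ : 0 ≤ e) (he₁ : e ≤ 1) : x ^ e ≤ M := by
  rcases le_or_gt x 1 with h | h
  · exact (rpow_le_one hx h he₀).trans hM
  · exact (rpow_le_self_of_one_le h.le he₁).trans hxM

lemma rpow_le_mul_rpow {x e p M : ℝ} (hx : 0 < x) (hxM : x ≤ M) (hM : 1 ≤ M)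
    (hpe : p ≤ e) (hep : e ≤ p + 1) : x ^ e ≤ M * x ^ p := by
  have hsplit : x ^ e = x ^ (e - p) * x ^ p := by rw [← rpow_add hx, sub_add_cancel]
  rw [hsplit]
  gcongr
  exact rpow_le_of_le_of_one_le hx.le hxM hM (by linarith) (by linarith)

lemma abs_log_le_log_add_abs_log {s y M : ℝ} (hs : 0 < s) (hsy : s ≤ y) (hyM : y ≤ M)
    (hM : 1 ≤ M) : |log y| ≤ log M + |log s| := by
  have h₁ : log s ≤ log y := log_le_log hs hsy
  have h₂ : log y ≤ log M := log_le_log (hs.trans_le hsy) hyM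
  have h₃ : 0 ≤ log M := log_nonneg hM
  rw [abs_le]
  constructor <;> linarith [neg_abs_le (log s), le_abs_self (log s)]

lemma abs_log_le_log_add_rpow_neg_div {x ε M : ℝ} (hx : 0 < x) (hxM : x ≤ M) (hM : 1 ≤ M)
    (hε : 0 < ε) : |log x| ≤ log M + x ^ (-ε) / ε := by
  have hpow : 0 ≤ x ^ (-ε) / ε := by positivity
  rcases le_or_gt x 1 with h | h
  · have hinv : log x⁻¹ ≤ x⁻¹ ^ ε / ε := log_le_rpow_div (by positivity) hε
    rw [log_inv, inv_rpow hx.le, ← rpow_neg hx.le] at hinv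
    rw [abs_of_nonpos (log_nonpos hx.le h)]
    linarith [log_nonneg hM]
  · rw [abs_of_pos (log_pos h)]
    linarith [log_le_log hx hxM]

section ShiftedPower

variable {s t r : ℝ}

lemma integrableOn_Ioo_sub_rpow (hst : s ≤ t) (hr : -1 < r) :
    IntegrableOn (fun y => (y - s) ^ r) (Ioo s t) := by
  have h := (intervalIntegral.intervalIntegrable_rpow' (a := 0) (b := t - s) hr).comp_sub_right s
  rw [zero_add, sub_add_cancel] at h
  exact (intervalIntegrable_iff_integrableOn_Ioo_of_le hst).mp h

lemma integral_Ioo_sub_rpow (hst : s ≤ t) (hr : -1 < r) :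
    ∫ y in Ioo s t, (y - s) ^ r = (t - s) ^ (r + 1) / (r + 1) := by
  rw [← integral_Ioc_eq_integral_Ioo, ← intervalIntegral.integral_of_le hst,
    intervalIntegral.integral_comp_sub_right (fun x => x ^ r) s, sub_self,
    integral_rpow (Or.inl hr), zero_rpow (by linarith), sub_zero]

lemma integral_Ioo_sub_rpow_le {M : ℝ} (hst : s ≤ t) (htsM : t - s ≤ M) (hM : 1 ≤ M)
    (hr₀ : 0 < r + 1) (hr₁ : r + 1 ≤ 1) :
    ∫ y in Ioo s t, (y - s) ^ r ≤ M / (r + 1) := by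
  rw [integral_Ioo_sub_rpow hst (by linarith)]
  gcongr
  exact rpow_le_of_le_of_one_le (by linarith) htsM hM hr₀.le hr₁

end ShiftedPower

noncomputable def kernelIntegrand (s H y : ℝ) : ℝ := (y - s) ^ (H - 3/2) * y ^ (H - 1/2)

lemma measurable_kernelIntegrand (s H : ℝ) : Measurable (kernelIntegrand s H) := by
  unfold kernelIntegrand; fun_prop

lemma hasDerivAt_kernelIntegrand {s y : ℝ} (H : ℝ) (hsy : s < y) (hy : 0 < y) :
    HasDerivAt (fun μ => kernelIntegrand s μ y)
      ((log (y - s) + log y) * kernelIntegrand s H y) H := by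
  have h₁ := ((hasDerivAt_id' H).sub_const (3/2 : ℝ)).const_rpow (sub_pos.2 hsy)
  have h₂ := ((hasDerivAt_id' H).sub_const (1/2 : ℝ)).const_rpow hy
  refine (h₁.mul h₂).congr_deriv ?_
  rw [kernelIntegrand]
  ring

section KernelBounds

variable {s t y M ε H : ℝ}

lemma abs_kernelIntegrand_le (hs : 0 ≤ s) (hsy : s < y) (hyM : y ≤ M) (hM : 1 ≤ M)
    (hε : 0 ≤ ε) (hH₀ : 1/2 + 2 * ε ≤ H) (hH₁ : H ≤ 3/2) :
    |kernelIntegrand s H y| ≤ M ^ 2 * (y - s) ^ (2 * ε - 1) := by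
  have hu : 0 < y - s := sub_pos.2 hsy
  have hy : 0 < y := by linarith
  have h₁ : (y - s) ^ (H - 3/2) ≤ M * (y - s) ^ (2 * ε - 1) :=
    rpow_le_mul_rpow hu (by linarith) hM (by linarith) (by linarith)
  have h₂ : y ^ (H - 1/2) ≤ M :=
    rpow_le_of_le_of_one_le hy.le hyM hM (by linarith) (by linarith)
  rw [kernelIntegrand, abs_of_nonneg (by positivity)]
  calc (y - s) ^ (H - 3/2) * y ^ (H - 1/2) ≤ (M * (y - s) ^ (2 * ε - 1)) * M :=
        mul_le_mul h₁ h₂ (by positivity) (by positivity)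
    _ = M ^ 2 * (y - s) ^ (2 * ε - 1) := by ring

noncomputable def kernelDerivMajorant (s M ε y : ℝ) : ℝ :=
  M ^ 2 * (2 * log M + |log s|) * (y - s) ^ (2 * ε - 1) + M ^ 2 / ε * (y - s) ^ (ε - 1)

lemma abs_kernelIntegrand_deriv_le (hs : 0 < s) (hsy : s < y) (hyM : y ≤ M) (hM : 1 ≤ M)
    (hε : 0 < ε) (hH₀ : 1/2 + 2 * ε ≤ H) (hH₁ : H ≤ 3/2) :
    |(log (y - s) + log y) * kernelIntegrand s H y| ≤ kernelDerivMajorant s M ε y := by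
  have hu : 0 < y - s := sub_pos.2 hsy
  have hlog : |log (y - s) + log y| ≤ 2 * log M + |log s| + (y - s) ^ (-ε) / ε := by
    have h₁ := abs_log_le_log_add_rpow_neg_div hu (by linarith) hM hε
    have h₂ := abs_log_le_log_add_abs_log hs hsy.le hyM hM
    linarith [abs_add_le (log (y - s)) (log y)]
  have hsplit : (y - s) ^ (ε - 1) = (y - s) ^ (-ε) * (y - s) ^ (2 * ε - 1) := by
    rw [← rpow_add hu]; ring_nf
  rw [abs_mul]
  calc |log (y - s) + log y| * |kernelIntegrand s H y|
      ≤ (2 * log M + |log s| + (y - s) ^ (-ε) / ε) * (M ^ 2 * (y - s) ^ (2 * ε - 1)) :=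
        mul_le_mul hlog (abs_kernelIntegrand_le hs.le hsy hyM hM hε.le hH₀ hH₁) (abs_nonneg _)
          ((abs_nonneg _).trans hlog)
    _ = kernelDerivMajorant s M ε y := by rw [kernelDerivMajorant, hsplit]; field_simp

lemma integrableOn_kernelDerivMajorant (hst : s ≤ t) (hε : 0 < ε) :
    IntegrableOn (kernelDerivMajorant s M ε) (Ioo s t) :=
  ((integrableOn_Ioo_sub_rpow hst (by linarith)).const_mul _).add
    ((integrableOn_Ioo_sub_rpow hst (by linarith)).const_mul _)

lemma integral_kernelDerivMajorant_le (hst : s ≤ t) (htsM : t - s ≤ M) (hM : 1 ≤ M)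
    (hε : 0 < ε) (h2ε : 2 * ε ≤ 1) :
    ∫ y in Ioo s t, kernelDerivMajorant s M ε y
      ≤ M ^ 3 * (2 * log M + |log s|) / (2 * ε) + M ^ 3 / ε ^ 2 := by
  have h₁ := integral_Ioo_sub_rpow_le (r := 2 * ε - 1) hst htsM hM (by linarith) (by linarith)
  have h₂ := integral_Ioo_sub_rpow_le (r := ε - 1) hst htsM hM (by linarith) (by linarith)
  rw [sub_add_cancel] at h₁ h₂
  have hc : 0 ≤ M ^ 2 * (2 * log M + |log s|) := by
    have := log_nonneg hM; positivity
  simp only [kernelDerivMajorant]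
  rw [integral_add ((integrableOn_Ioo_sub_rpow hst (by linarith)).const_mul _)
    ((integrableOn_Ioo_sub_rpow hst (by linarith)).const_mul _), integral_const_mul,
    integral_const_mul]
  calc M ^ 2 * (2 * log M + |log s|) * (∫ y in Ioo s t, (y - s) ^ (2 * ε - 1))
        + M ^ 2 / ε * ∫ y in Ioo s t, (y - s) ^ (ε - 1)
      ≤ M ^ 2 * (2 * log M + |log s|) * (M / (2 * ε)) + M ^ 2 / ε * (M / ε) := by
        gcongr
    _ = _ := by field_simp

lemma abs_integral_kernelIntegrand_le (hs : 0 ≤ s) (hst : s ≤ t) (htM : t ≤ M) (hM : 1 ≤ M)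
    (hε : 0 < ε) (hH₀ : 1/2 + 2 * ε ≤ H) (hH₁ : H ≤ 3/2) :
    |∫ y in Ioo s t, kernelIntegrand s H y| ≤ M ^ 3 / (2 * ε) := by
  have hint := (integrableOn_Ioo_sub_rpow (r := 2 * ε - 1) hst (by linarith)).const_mul (M ^ 2)
  have hbound := integral_Ioo_sub_rpow_le (r := 2 * ε - 1) hst (by linarith) hM (by linarith)
    (by linarith)
  rw [sub_add_cancel] at hbound
  calc |∫ y in Ioo s t, kernelIntegrand s H y|
      ≤ ∫ y in Ioo s t, M ^ 2 * (y - s) ^ (2 * ε - 1) :=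
        norm_integral_le_of_norm_le (f := kernelIntegrand s H) hint <|
          ae_restrict_of_forall_mem measurableSet_Ioo fun y hy =>
            abs_kernelIntegrand_le hs hy.1 (hy.2.le.trans htM) hM hε.le hH₀ hH₁
    _ ≤ M ^ 2 * (M / (2 * ε)) := by rw [integral_const_mul]; gcongr
    _ = M ^ 3 / (2 * ε) := by ring

lemma abs_integral_kernelIntegrand_deriv_le (hs : 0 < s) (hst : s ≤ t) (htM : t ≤ M)
    (hM : 1 ≤ M) (hε : 0 < ε) (hH₀ : 1/2 + 2 * ε ≤ H) (hH₁ : H ≤ 3/2) :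
    |∫ y in Ioo s t, (log (y - s) + log y) * kernelIntegrand s H y|
      ≤ M ^ 3 * (2 * log M + |log s|) / (2 * ε) + M ^ 3 / ε ^ 2 :=
  (norm_integral_le_of_norm_le (f := fun y => (log (y - s) + log y) * kernelIntegrand s H y)
    (integrableOn_kernelDerivMajorant hst hε) <|
    ae_restrict_of_forall_mem measurableSet_Ioo fun y hy =>
      abs_kernelIntegrand_deriv_le hs hy.1 (hy.2.le.trans htM) hM hε hH₀ hH₁).trans
  (integral_kernelDerivMajorant_le hst (by linarith) hM hε (by linarith))

lemma hasDerivAt_integral_kernelIntegrand (hs : 0 < s) (hst : s ≤ t) (hH₀ : 1/2 < H)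
    (hH₁ : H < 3/2) :
    HasDerivAt (fun μ => ∫ y in Ioo s t, kernelIntegrand s μ y)
      (∫ y in Ioo s t, (log (y - s) + log y) * kernelIntegrand s H y) H := by
  obtain ⟨ε, hε, hεH⟩ :
      ∃ ε > 0, ∀ μ ∈ Metric.ball H ε, 1/2 + 2 * ε ≤ μ ∧ μ ≤ 3/2 := by
    refine ⟨min ((H - 1/2) / 3) (3/2 - H), lt_min (by linarith) (by linarith), fun μ hμ => ?_⟩
    rw [Metric.mem_ball, Real.dist_eq, abs_lt] at hμ
    constructor <;> linarith [min_le_left ((H - 1/2) / 3) (3/2 - H),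
      min_le_right ((H - 1/2) / 3) (3/2 - H)]
  have htM : t ≤ max 1 t := le_max_right 1 t
  have hM : 1 ≤ max 1 t := le_max_left 1 t
  have hHε := hεH H (Metric.mem_ball_self hε)
  have hint : IntegrableOn (kernelIntegrand s H) (Ioo s t) :=
    ((integrableOn_Ioo_sub_rpow (r := 2 * ε - 1) hst (by linarith)).const_mul _).mono'
      (measurable_kernelIntegrand s H).aestronglyMeasurable <|
        ae_restrict_of_forall_mem measurableSet_Ioo fun y hy =>
          abs_kernelIntegrand_le hs.le hy.1 (hy.2.le.trans htM) hM hε.le hHε.1 hHε.2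
  refine (hasDerivAt_integral_of_dominated_loc_of_deriv_le
    (F' := fun μ y => (log (y - s) + log y) * kernelIntegrand s μ y) (Metric.ball_mem_nhds H hε)
    (Eventually.of_forall fun μ => (measurable_kernelIntegrand s μ).aestronglyMeasurable) hint
    (by unfold kernelIntegrand; fun_prop) ?_
    (integrableOn_kernelDerivMajorant (M := max 1 t) hst hε) ?_).2
  · exact ae_restrict_of_forall_mem measurableSet_Ioo fun y hy μ hμ =>
      abs_kernelIntegrand_deriv_le hs hy.1 (hy.2.le.trans htM) hM hε (hεH μ hμ).1
        (hεH μ hμ).2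
  · exact ae_restrict_of_forall_mem measurableSet_Ioo fun y hy μ _ =>
      hasDerivAt_kernelIntegrand μ hy.1 (hs.trans hy.1)

lemma hasDerivAt_K (hs : 0 < s) (hst : s ≤ t) (hH₀ : 1/2 < H) (hH₁ : H < 3/2) :
    HasDerivAt (fun μ => K μ t s)
      (s ^ (1/2 - H) * ((∫ y in Ioo s t, (log (y - s) + log y) * kernelIntegrand s H y)
        - log s * ∫ y in Ioo s t, kernelIntegrand s H y)) H := by
  have hpow := ((hasDerivAt_id' H).const_sub (1/2 : ℝ)).const_rpow hs
  refine (hpow.mul (hasDerivAt_integral_kernelIntegrand hs hst hH₀ hH₁)).congr_deriv ?_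
  ring

lemma abs_deriv_K_le {M ε : ℝ} (hs : 0 < s) (hst : s ≤ t) (htM : t ≤ M) (hM : 1 ≤ M)
    (hε : 0 < ε) (hH₀ : 1/2 + 2 * ε ≤ H) (hH₁ : H < 3/2) :
    |deriv (fun μ => K μ t s) H|
      ≤ M ^ 3 * (1 + log M + 1 / ε) / ε * max 1 |log s| * s ^ (1/2 - H) := by
  set I := ∫ y in Ioo s t, kernelIntegrand s H y
  set I' := ∫ y in Ioo s t, (log (y - s) + log y) * kernelIntegrand s H y
  have hI : |I| ≤ M ^ 3 / (2 * ε) :=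
    abs_integral_kernelIntegrand_le hs.le hst htM hM hε hH₀ hH₁.le
  have hI' : |I'| ≤ M ^ 3 * (2 * log M + |log s|) / (2 * ε) + M ^ 3 / ε ^ 2 :=
    abs_integral_kernelIntegrand_deriv_le hs hst htM hM hε hH₀ hH₁.le
  have hlogM : 0 ≤ log M := log_nonneg hM
  have hL₁ : 1 ≤ max 1 |log s| := le_max_left _ _
  have hL : |log s| ≤ max 1 |log s| := le_max_right _ _
  have hbracket : |I' - log s * I| ≤ M ^ 3 * (1 + log M + 1 / ε) / ε * max 1 |log s| :=
    calc |I' - log s * I| ≤ |I'| + |log s| * |I| := by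
          rw [← abs_mul]; exact abs_sub _ _
      _ ≤ M ^ 3 * (2 * log M + |log s|) / (2 * ε) + M ^ 3 / ε ^ 2
            + |log s| * (M ^ 3 / (2 * ε)) := by gcongr
      _ = M ^ 3 / ε * (|log s| + (log M + 1 / ε)) := by field_simp; ring
      _ ≤ M ^ 3 / ε * (max 1 |log s| + max 1 |log s| * (log M + 1 / ε)) := by
          gcongr
          exact le_mul_of_one_le_left (by positivity) hL₁
      _ = M ^ 3 * (1 + log M + 1 / ε) / ε * max 1 |log s| := by ring
  rw [(hasDerivAt_K hs hst (by linarith) hH₁).deriv, abs_mul, abs_of_nonneg (by positivity),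
    mul_comm]
  gcongr

end KernelBounds

theorem stmt2_general (a b T : ℝ) (ha : 1/2 < a) (hb : b < 1) :
    ∃ C > 0, ∀ lam ∈ Set.Icc a b, ∀ t ∈ Set.Ioc (0:ℝ) T, ∀ s ∈ Set.Ioo (0:ℝ) t,
      |deriv (fun μ : ℝ => K μ t s) lam| ≤ C * (max 1 |Real.log s|) * s ^ (1/2 - b) := by
  set M := max 1 T
  set ε := (a - 1/2) / 2
  have hM : 1 ≤ M := le_max_left 1 T
  have hε : 0 < ε := by positivity
  have h2ε : 1/2 + 2 * ε = a := by simp only [ε]; ring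
  have hlogM : 0 ≤ log M := log_nonneg hM
  refine ⟨M ^ 4 * (1 + log M + 1 / ε) / ε, by positivity, ?_⟩
  rintro lam ⟨hal, hlb⟩ t ⟨-, htT⟩ s ⟨hs, hst⟩
  have htM : t ≤ M := htT.trans (le_max_right 1 T)
  calc |deriv (fun μ => K μ t s) lam|
      ≤ M ^ 3 * (1 + log M + 1 / ε) / ε * max 1 |log s| * s ^ (1/2 - lam) :=
        abs_deriv_K_le hs hst.le htM hM hε (by linarith) (by linarith)
    _ ≤ M ^ 3 * (1 + log M + 1 / ε) / ε * max 1 |log s| * (M * s ^ (1/2 - b)) := by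
        gcongr
        exact rpow_le_mul_rpow hs (hst.le.trans htM) hM (by linarith) (by linarith)
    _ = M ^ 4 * (1 + log M + 1 / ε) / ε * max 1 |log s| * s ^ (1/2 - b) := by ring

theorem stmt2 (a b T : ℝ) (ha : 1/2 < a) (hab : a < b) (hb : b < 1) (hT : 0 < T) :
    ∃ C > 0, ∀ lam ∈ Set.Icc a b, ∀ t ∈ Set.Ioc (0:ℝ) T, ∀ s ∈ Set.Ioo (0:ℝ) t,
      |deriv (fun μ : ℝ => K μ t s) lam| ≤ C * (max 1 |Real.log s|) * s ^ (1/2 - b) :=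
  stmt2_general a b T ha hb
end

section
/- Fix 1/2 < a < b < 1 and T > 0, and let K_λ(t,s) = s^{1/2-λ} ∫_s^t (y-s)^{λ-3/2} y^{λ-1/2} dy. Then there exists C_T > 0 such that for all t ∈ (0,T] and all λ, λ' ∈ [a,b], ∫₀^t (K_λ(t,u) - K_{λ'}(t,u))² du ≤ C_T |λ - λ'|². -/
open MeasureTheory Set

/-! With `q = (y - s) y / s`, the integrand of `K λ t s` is `(y - s)⁻¹ q ^ (λ - 1/2)`. The mean
value theorem in the exponent, with `|log q|` absorbed into `q ^ (± ε)`, bounds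
`|K λ t s - K λ' t s|` by `|λ - λ'|` times `K (a - ε) t s + K (b + ε) t s`, and
`K H t s ≤ C s ^ (1/2 - H)` is square integrable on `(0, T)` as long as `H < 1`. -/

namespace Real

lemma rpow_le_rpow_add_rpow {q c d x : ℝ} (hq : 0 < q) (hx : x ∈ Icc c d) :
    q ^ x ≤ q ^ c + q ^ d := by
  rcases le_total q 1 with hq1 | hq1
  · linarith [rpow_le_rpow_of_exponent_ge hq hq1 hx.1, rpow_nonneg hq.le d]
  · linarith [rpow_le_rpow_of_exponent_le hq1 hx.2, rpow_nonneg hq.le c]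

lemma abs_log_le_rpow_add_rpow {q ε : ℝ} (hq : 0 < q) (hε : 0 < ε) :
    |log q| ≤ (q ^ ε + q ^ (-ε)) / ε := by
  have hpos := log_le_rpow_div hq.le hε
  have hneg := log_le_rpow_div (inv_pos.2 hq).le hε
  rw [log_inv, inv_rpow hq.le, ← rpow_neg hq.le] at hneg
  have h₁ : 0 < q ^ ε / ε := by positivity
  have h₂ : 0 < q ^ (-ε) / ε := by positivity
  rw [abs_le, add_div]
  constructor <;> linarith

lemma abs_log_mul_rpow_le {q ε x : ℝ} (hq : 0 < q) (hε : 0 < ε) :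
    |log q| * q ^ x ≤ (q ^ (x - ε) + q ^ (x + ε)) / ε := by
  calc |log q| * q ^ x ≤ (q ^ ε + q ^ (-ε)) / ε * q ^ x := by
        gcongr; exact abs_log_le_rpow_add_rpow hq hε
    _ = (q ^ (x - ε) + q ^ (x + ε)) / ε := by
        rw [sub_eq_neg_add, rpow_add hq, rpow_add hq]; ring

/-- Mean value theorem for `x ↦ q ^ x`, with the factor `log q` absorbed by widening the
exponent range by `ε`. -/
lemma abs_rpow_sub_rpow_le {q c d ε α β : ℝ} (hq : 0 < q) (hε : 0 < ε)
    (hα : α ∈ Icc c d) (hβ : β ∈ Icc c d) :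
    |q ^ α - q ^ β| ≤ 2 / ε * (q ^ (c - ε) + q ^ (d + ε)) * |α - β| := by
  have hderiv : ∀ x ∈ Icc c d, HasDerivWithinAt (fun x => q ^ x) (q ^ x * log q) (Icc c d) x :=
    fun x _ => (hasStrictDerivAt_const_rpow hq x).hasDerivAt.hasDerivWithinAt
  have hbound : ∀ x ∈ Icc c d, ‖q ^ x * log q‖ ≤ 2 / ε * (q ^ (c - ε) + q ^ (d + ε)) := by
    intro x hx
    have h₁ : q ^ (x - ε) ≤ q ^ (c - ε) + q ^ (d + ε) :=
      rpow_le_rpow_add_rpow hq ⟨by linarith [hx.1], by linarith [hx.2]⟩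
    have h₂ : q ^ (x + ε) ≤ q ^ (c - ε) + q ^ (d + ε) :=
      rpow_le_rpow_add_rpow hq ⟨by linarith [hx.1], by linarith [hx.2]⟩
    rw [norm_mul, norm_of_nonneg (rpow_nonneg hq.le x), mul_comm, norm_eq_abs]
    calc |log q| * q ^ x ≤ (q ^ (x - ε) + q ^ (x + ε)) / ε := abs_log_mul_rpow_le hq hε
      _ ≤ 2 / ε * (q ^ (c - ε) + q ^ (d + ε)) := by
        rw [div_mul_eq_mul_div]; gcongr; linarith
  exact (convex_Icc c d).norm_image_sub_le_of_norm_hasDerivWithin_le hderiv hbound hβ hα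

end Real

lemma integrableOn_sub_rpow {s t p : ℝ} (hp : -1 < p) :
    IntegrableOn (fun y => (y - s) ^ p) (Ioo s t) := by
  rcases le_total t s with hts | hst
  · simp [Ioo_eq_empty_of_le hts]
  have h : IntervalIntegrable (fun y => (y - s) ^ p) volume s t := by
    simpa using
      (intervalIntegral.intervalIntegrable_rpow' (a := 0) (b := t - s) hp).comp_sub_right s
  exact (intervalIntegrable_iff_integrableOn_Ioo_of_le hst).1 h

lemma setIntegral_sub_rpow {s t p : ℝ} (hp : -1 < p) (hst : s ≤ t) :
    ∫ y in Ioo s t, (y - s) ^ p = (t - s) ^ (p + 1) / (p + 1) := by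
  rw [← integral_Ioc_eq_integral_Ioo, ← intervalIntegral.integral_of_le hst,
    intervalIntegral.integral_comp_sub_right (fun x => x ^ p) s, integral_rpow (Or.inl hp),
    sub_self, Real.zero_rpow (by linarith), sub_zero]

lemma integrableOn_K_integrand {H s t : ℝ} (hH : 1/2 < H) (hs : 0 < s) :
    IntegrableOn (fun y => (y - s) ^ (H - 3/2) * y ^ (H - 1/2)) (Ioo s t) := by
  refine Integrable.mono' ((integrableOn_sub_rpow (s := s) (t := t) (p := H - 3/2)
    (by linarith)).mul_const (t ^ (H - 1/2))) (by fun_prop) ?_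
  filter_upwards [ae_restrict_mem measurableSet_Ioo] with y ⟨hsy, hyt⟩
  have hy : 0 < y := hs.trans hsy
  rw [Real.norm_of_nonneg (by positivity)]
  gcongr

lemma K_le {H s t T : ℝ} (hH : 1/2 < H) (hs : 0 < s) (hst : s < t) (htT : t ≤ T) :
    K H t s ≤ T ^ (2 * H - 1) / (H - 1/2) * s ^ (1/2 - H) := by
  have hT : 0 < T := by linarith
  have hint : ∫ y in Ioo s t, (y - s) ^ (H - 3/2) * y ^ (H - 1/2) ≤
      ∫ y in Ioo s t, (y - s) ^ (H - 3/2) * T ^ (H - 1/2) := by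
    refine setIntegral_mono_on (integrableOn_K_integrand hH hs)
      ((integrableOn_sub_rpow (by linarith)).mul_const _) measurableSet_Ioo fun y ⟨hsy, hyt⟩ => ?_
    have hy : 0 < y := hs.trans hsy
    gcongr
    linarith
  have hts : (t - s) ^ (H - 1/2) ≤ T ^ (H - 1/2) := by gcongr; linarith
  rw [integral_mul_const, setIntegral_sub_rpow (by linarith) hst.le,
    show H - 3/2 + 1 = H - 1/2 by ring] at hint
  calc K H t s ≤ s ^ (1/2 - H) * ((t - s) ^ (H - 1/2) / (H - 1/2) * T ^ (H - 1/2)) := by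
        unfold K; gcongr
    _ ≤ s ^ (1/2 - H) * (T ^ (H - 1/2) / (H - 1/2) * T ^ (H - 1/2)) := by
        gcongr
    _ = T ^ (2 * H - 1) / (H - 1/2) * s ^ (1/2 - H) := by
        rw [show 2 * H - 1 = (H - 1/2) + (H - 1/2) by ring, Real.rpow_add hT]; ring

lemma K_integrand_eq {H s y : ℝ} (hs : 0 < s) (hsy : s < y) :
    s ^ (1/2 - H) * ((y - s) ^ (H - 3/2) * y ^ (H - 1/2)) =
      (y - s)⁻¹ * ((y - s) * y / s) ^ (H - 1/2) := by
  have hys : 0 < y - s := by linarith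
  have hy : 0 < y := hs.trans hsy
  rw [Real.div_rpow (mul_pos hys hy).le hs.le, Real.mul_rpow hys.le hy.le,
    show H - 3/2 = -1 + (H - 1/2) by ring, Real.rpow_add hys, Real.rpow_neg_one,
    show 1/2 - H = -(H - 1/2) by ring, Real.rpow_neg hs.le]
  ring

lemma K_eq_setIntegral {H t s : ℝ} (hs : 0 < s) :
    K H t s = ∫ y in Ioo s t, (y - s)⁻¹ * ((y - s) * y / s) ^ (H - 1/2) := by
  rw [K, ← integral_const_mul]
  exact setIntegral_congr_fun measurableSet_Ioo fun _ hy => K_integrand_eq hs hy.1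

lemma abs_K_sub_K_le {a b ε lam lam' t s : ℝ} (hε : 0 < ε) (ha : 1/2 < a - ε) (hs : 0 < s)
    (hlam : lam ∈ Icc a b) (hlam' : lam' ∈ Icc a b) :
    |K lam t s - K lam' t s| ≤ 2 / ε * (K (a - ε) t s + K (b + ε) t s) * |lam - lam'| := by
  have hint : ∀ H : ℝ, 1/2 < H →
      IntegrableOn (fun y => (y - s)⁻¹ * ((y - s) * y / s) ^ (H - 1/2)) (Ioo s t) :=
    fun H hH => IntegrableOn.congr_fun
      ((integrableOn_K_integrand hH hs).const_mul (s ^ (1/2 - H)))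
      (fun _ hy => K_integrand_eq hs hy.1) measurableSet_Ioo
  have hb : 1/2 < b + ε := by linarith [hlam.1, hlam.2]
  simp only [K_eq_setIntegral hs]
  rw [← integral_sub (hint lam (by linarith [hlam.1])) (hint lam' (by linarith [hlam'.1])),
    ← integral_add (hint _ ha) (hint _ hb), ← integral_const_mul, ← integral_mul_const,
    ← Real.norm_eq_abs]
  refine norm_integral_le_of_norm_le
    (((hint _ ha).add (hint _ hb)).const_mul _ |>.mul_const _) ?_
  filter_upwards [ae_restrict_mem measurableSet_Ioo] with y ⟨hsy, _⟩
  have hys : 0 < y - s := by linarith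
  have hy : 0 < y := hs.trans hsy
  have hq : 0 < (y - s) * y / s := by positivity
  have hdiff := Real.abs_rpow_sub_rpow_le hq hε (c := a - 1/2) (d := b - 1/2)
    (α := lam - 1/2) (β := lam' - 1/2)
    ⟨by linarith [hlam.1], by linarith [hlam.2]⟩ ⟨by linarith [hlam'.1], by linarith [hlam'.2]⟩
  rw [show a - 1/2 - ε = a - ε - 1/2 by ring, show b - 1/2 + ε = b + ε - 1/2 by ring] at hdiff
  rw [← mul_sub, Real.norm_eq_abs, abs_mul, abs_of_pos (inv_pos.2 hys)]
  calc (y - s)⁻¹ * |((y - s) * y / s) ^ (lam - 1/2) - ((y - s) * y / s) ^ (lam' - 1/2)|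
      ≤ (y - s)⁻¹ * (2 / ε * (((y - s) * y / s) ^ (a - ε - 1/2) +
          ((y - s) * y / s) ^ (b + ε - 1/2)) * |lam - 1/2 - (lam' - 1/2)|) := by gcongr
    _ = _ := by rw [show lam - 1/2 - (lam' - 1/2) = lam - lam' by ring]; ring

lemma memLp_two_rpow_Ioo {p T : ℝ} (hp : -1/2 < p) (hT : 0 < T) :
    MemLp (fun u : ℝ => u ^ p) 2 (volume.restrict (Ioo 0 T)) := by
  refine (memLp_two_iff_integrable_sq (by fun_prop)).2 ?_
  have hint : IntegrableOn (fun u : ℝ => u ^ (p * 2)) (Ioo 0 T) :=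
    (intervalIntegral.integrableOn_Ioo_rpow_iff hT).2 (by linarith)
  refine hint.congr_fun (fun u hu => ?_) measurableSet_Ioo
  exact_mod_cast Real.rpow_mul_natCast hu.1.le p 2

lemma setIntegral_sq_le_of_abs_le {α : Type*} [MeasurableSpace α] {μ : Measure α}
    {f g : α → ℝ} {s S : Set α} {c : ℝ} (hs : MeasurableSet s) (hsS : s ⊆ S)
    (hg : IntegrableOn (fun u => g u ^ 2) S μ) (hfg : ∀ u ∈ s, |f u| ≤ c * g u) :
    ∫ u in s, f u ^ 2 ∂μ ≤ c ^ 2 * ∫ u in S, g u ^ 2 ∂μ := by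
  calc ∫ u in s, f u ^ 2 ∂μ ≤ ∫ u in s, c ^ 2 * g u ^ 2 ∂μ := by
        refine integral_mono_of_nonneg (.of_forall fun _ => sq_nonneg _)
          ((hg.mono_set hsS).const_mul _) ?_
        filter_upwards [ae_restrict_mem hs] with u hu
        rw [← mul_pow, ← sq_abs]
        exact pow_le_pow_left₀ (abs_nonneg _) (hfg u hu) 2
    _ ≤ c ^ 2 * ∫ u in S, g u ^ 2 ∂μ := by
        rw [integral_const_mul]
        exact mul_le_mul_of_nonneg_left
          (setIntegral_mono_set hg (.of_forall fun _ => sq_nonneg _) hsS.eventuallyLE)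
          (sq_nonneg c)

theorem stmt5 (a b T : ℝ) (ha : 1/2 < a) (hab : a < b) (hb : b < 1) (hT : 0 < T) :
    ∃ C > 0, ∀ t ∈ Set.Ioc (0:ℝ) T, ∀ lam ∈ Set.Icc a b, ∀ lam' ∈ Set.Icc a b,
      ∫ u in Set.Ioo (0:ℝ) t, (K lam t u - K lam' t u) ^ 2 ≤ C * |lam - lam'| ^ 2 := by
  obtain ⟨ε, hε, haε, hbε⟩ : ∃ ε > 0, 1/2 < a - ε ∧ b + ε < 1 :=
    ⟨min ((a - 1/2) / 2) ((1 - b) / 2), by positivity,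
      by linarith [min_le_left ((a - 1/2) / 2) ((1 - b) / 2)],
      by linarith [min_le_right ((a - 1/2) / 2) ((1 - b) / 2)]⟩
  set H₁ := a - ε
  set H₂ := b + ε
  set g : ℝ → ℝ := fun u => 2 / ε * (T ^ (2 * H₁ - 1) / (H₁ - 1/2) * u ^ (1/2 - H₁) +
    T ^ (2 * H₂ - 1) / (H₂ - 1/2) * u ^ (1/2 - H₂))
  have hg : IntegrableOn (fun u => g u ^ 2) (Ioo 0 T) :=
    ((((memLp_two_rpow_Ioo (by linarith) hT).const_mul _).add
      ((memLp_two_rpow_Ioo (by linarith) hT).const_mul _)).const_mul _).integrable_sq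
  refine ⟨(∫ u in Ioo 0 T, g u ^ 2) + 1,
    add_pos_of_nonneg_of_pos (integral_nonneg fun _ => sq_nonneg _) one_pos,
    fun t ht lam hlam lam' hlam' => ?_⟩
  calc ∫ u in Ioo 0 t, (K lam t u - K lam' t u) ^ 2
      ≤ |lam - lam'| ^ 2 * ∫ u in Ioo 0 T, g u ^ 2 := by
        refine setIntegral_sq_le_of_abs_le measurableSet_Ioo (Ioo_subset_Ioo_right ht.2) hg
          fun u ⟨hu, hut⟩ => ?_
        rw [mul_comm]
        refine (abs_K_sub_K_le hε haε hu hlam hlam').trans ?_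
        gcongr
        exact mul_le_mul_of_nonneg_left
          (add_le_add (K_le haε hu hut ht.2) (K_le (by linarith) hu hut ht.2))
          (by positivity)
    _ ≤ ((∫ u in Ioo 0 T, g u ^ 2) + 1) * |lam - lam'| ^ 2 := by
        rw [mul_comm]
        exact mul_le_mul_of_nonneg_right (le_add_of_nonneg_right zero_le_one) (sq_nonneg _)
end

section
/- Let 1/2 < a < b < 1, let h : ℝ → [a,b] be β-Hölder continuous with sup h < β ≤ 1, and let X(t,λ) be a family of centered jointly Gaussian random variables such that E[(X(t,λ)-X(s,λ))²] = c_λ^{-2}|t-s|^{2λ} and E[(X(t,λ)-X(t,λ'))²] ≤ C_T|λ-λ'|² for t,s ∈ [0,T], λ,λ' ∈ [a,b], where λ ↦ c_λ^{-2} is continuous and positive on [a,b]. Then B_h(t) = X(t, h(t)) satisfies: there is a constant C > 0 such that E[(B_h(t)-B_h(s))²] ≤ C |t-s|^{2a} for all s,t ∈ [0,T] with |t-s| < 1. -/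
open MeasureTheory Set

/-!
Split the increment as `X(t, h t) - X(s, h s) = (X(t, h t) - X(s, h t)) + (X(s, h t) - X(s, h s))`
and use `(x + y)² ≤ 2x² + 2y²`. The first term is an increment in time at the fixed index
`λ = h t ≥ a`, so its second moment is `c_λ⁻² |t - s|^{2λ} ≤ (max c⁻²) |t - s|^{2a}` when
`|t - s| ≤ 1`. The second is an increment in the index, bounded by `C_T |h t - h s|²`, and the
Hölder property with `a < sup h < β` turns this into `C_T L² |t - s|^{2β} ≤ C_T L² |t - s|^{2a}`.
-/

theorem integral_add_sq_le {α : Type*} [MeasurableSpace α] {μ : Measure α} {f g : α → ℝ}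
    (hf : MemLp f 2 μ) (hg : MemLp g 2 μ) :
    ∫ x, (f x + g x) ^ 2 ∂μ ≤ 2 * ∫ x, f x ^ 2 ∂μ + 2 * ∫ x, g x ^ 2 ∂μ := by
  have hf2 := hf.integrable_sq.const_mul 2
  have hg2 := hg.integrable_sq.const_mul 2
  calc ∫ x, (f x + g x) ^ 2 ∂μ ≤ ∫ x, (2 * f x ^ 2 + 2 * g x ^ 2) ∂μ :=
        integral_mono (hf.add hg).integrable_sq (hf2.add hg2)
          fun x => by nlinarith [sq_nonneg (f x - g x)]
    _ = 2 * ∫ x, f x ^ 2 ∂μ + 2 * ∫ x, g x ^ 2 ∂μ := by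
        rw [integral_add hf2 hg2, integral_const_mul, integral_const_mul]

theorem sq_le_of_abs_le_mul_rpow {x L r a β : ℝ} (hx : |x| ≤ L * r ^ β) (hr0 : 0 ≤ r)
    (hr1 : r ≤ 1) (ha : 0 ≤ a) (haβ : a ≤ β) :
    x ^ 2 ≤ L ^ 2 * r ^ (2 * a) := by
  calc x ^ 2 = |x| ^ 2 := (sq_abs x).symm
    _ ≤ (L * r ^ β) ^ 2 := pow_le_pow_left₀ (abs_nonneg x) hx 2
    _ = L ^ 2 * r ^ (2 * β) := by
        rw [mul_pow, mul_comm 2 β, Real.rpow_mul hr0, Real.rpow_two]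
    _ ≤ L ^ 2 * r ^ (2 * a) :=
        mul_le_mul_of_nonneg_left
          (Real.rpow_le_rpow_of_exponent_ge' hr0 hr1 (by positivity) (by linarith)) (sq_nonneg L)

theorem mul_rpow_le_mul_rpow_of_le_one {c M r p q : ℝ} (hc : |c| ≤ M) (hr0 : 0 ≤ r)
    (hr1 : r ≤ 1) (hp : 0 ≤ p) (hpq : p ≤ q) :
    c * r ^ q ≤ M * r ^ p :=
  mul_le_mul ((le_abs_self c).trans hc) (Real.rpow_le_rpow_of_exponent_ge' hr0 hr1 hp hpq)
    (by positivity) ((abs_nonneg c).trans hc)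

theorem stmt6_general {Ω : Type*} [MeasureSpace Ω]
    (a b T beta : ℝ) (ha : 1/2 < a)
    (h : ℝ → ℝ) (hrange : ∀ t, h t ∈ Set.Icc a b)
    (L : ℝ) (hHolder : ∀ s t : ℝ, |h t - h s| ≤ L * |t - s| ^ beta)
    (hsup : ∃ β' < beta, ∀ t, h t ≤ β')
    (X : ℝ → ℝ → Ω → ℝ)
    (hL2 : ∀ t lam, MemLp (X t lam) 2 volume)
    (g : ℝ → ℝ) (hg : ContinuousOn g (Set.Icc a b))
    (hmoment1 : ∀ lam ∈ Set.Icc a b, ∀ s t : ℝ,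
      ∫ ω, (X t lam ω - X s lam ω) ^ 2 = g lam * |t - s| ^ (2 * lam))
    (C_T : ℝ)
    (hmoment2 : ∀ t ∈ Set.Icc (0:ℝ) T, ∀ lam ∈ Set.Icc a b, ∀ lam' ∈ Set.Icc a b,
      ∫ ω, (X t lam ω - X t lam' ω) ^ 2 ≤ C_T * |lam - lam'| ^ 2) :
    ∃ C > 0, ∀ s ∈ Set.Icc (0:ℝ) T, ∀ t ∈ Set.Icc (0:ℝ) T, |t - s| < 1 →
      ∫ ω, (X t (h t) ω - X s (h s) ω) ^ 2 ≤ C * |t - s| ^ (2 * a) := by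
  obtain ⟨β', hβ'β, hhβ'⟩ := hsup
  have ha0 : 0 ≤ a := by linarith
  have haβ : a ≤ beta := ((hrange 0).1.trans (hhβ' 0)).trans hβ'β.le
  obtain ⟨M, hM⟩ := isCompact_Icc.exists_bound_of_continuousOn hg
  have hM0 : 0 ≤ M := (norm_nonneg _).trans (hM _ (hrange 0))
  refine ⟨2 * M + 2 * max C_T 0 * L ^ 2 + 1, by positivity, fun s hs t _ hts => ?_⟩
  have hr : 0 ≤ |t - s| ^ (2 * a) := by positivity
  have htime : ∫ ω, (X t (h t) ω - X s (h t) ω) ^ 2 ≤ M * |t - s| ^ (2 * a) :=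
    (hmoment1 _ (hrange t) s t).trans_le <| mul_rpow_le_mul_rpow_of_le_one (hM _ (hrange t))
      (abs_nonneg _) hts.le (by positivity) (by linarith [(hrange t).1])
  have hindex : ∫ ω, (X s (h t) ω - X s (h s) ω) ^ 2 ≤ max C_T 0 * L ^ 2 * |t - s| ^ (2 * a) := by
    calc ∫ ω, (X s (h t) ω - X s (h s) ω) ^ 2 ≤ C_T * |h t - h s| ^ 2 :=
          hmoment2 s hs _ (hrange t) _ (hrange s)
      _ ≤ max C_T 0 * (L ^ 2 * |t - s| ^ (2 * a)) := by
          gcongr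
          · exact le_max_left _ _
          · rw [sq_abs]
            exact sq_le_of_abs_le_mul_rpow (hHolder s t) (abs_nonneg _) hts.le ha0 haβ
      _ = max C_T 0 * L ^ 2 * |t - s| ^ (2 * a) := by ring
  calc ∫ ω, (X t (h t) ω - X s (h s) ω) ^ 2
      = ∫ ω, ((X t (h t) ω - X s (h t) ω) + (X s (h t) ω - X s (h s) ω)) ^ 2 := by
        simp_rw [sub_add_sub_cancel]
    _ ≤ 2 * (∫ ω, (X t (h t) ω - X s (h t) ω) ^ 2) + 2 * ∫ ω, (X s (h t) ω - X s (h s) ω) ^ 2 :=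
        integral_add_sq_le ((hL2 t (h t)).sub (hL2 s (h t))) ((hL2 s (h t)).sub (hL2 s (h s)))
    _ ≤ (2 * M + 2 * max C_T 0 * L ^ 2 + 1) * |t - s| ^ (2 * a) := by linarith

theorem stmt6 {Ω : Type*} [MeasureSpace Ω] [IsProbabilityMeasure (volume : Measure Ω)]
    (a b T beta : ℝ) (ha : 1/2 < a) (hab : a < b) (hb : b < 1) (hT : 0 < T)
    (h : ℝ → ℝ) (hrange : ∀ t, h t ∈ Set.Icc a b)
    (L : ℝ) (hHolder : ∀ s t : ℝ, |h t - h s| ≤ L * |t - s| ^ beta)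
    (hbeta1 : beta ≤ 1) (hsup : ∃ β' < beta, ∀ t, h t ≤ β')
    (X : ℝ → ℝ → Ω → ℝ)
    (hL2 : ∀ t lam, MemLp (X t lam) 2 volume)
    (hcenter : ∀ t lam, ∫ ω, X t lam ω = 0)
    (g : ℝ → ℝ) (hg : ContinuousOn g (Set.Icc a b))
    (hgpos : ∀ lam ∈ Set.Icc a b, 0 < g lam)
    (hmoment1 : ∀ lam ∈ Set.Icc a b, ∀ s t : ℝ,
      ∫ ω, (X t lam ω - X s lam ω) ^ 2 = g lam * |t - s| ^ (2 * lam))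
    (C_T : ℝ)
    (hmoment2 : ∀ t ∈ Set.Icc (0:ℝ) T, ∀ lam ∈ Set.Icc a b, ∀ lam' ∈ Set.Icc a b,
      ∫ ω, (X t lam ω - X t lam' ω) ^ 2 ≤ C_T * |lam - lam'| ^ 2) :
    ∃ C > 0, ∀ s ∈ Set.Icc (0:ℝ) T, ∀ t ∈ Set.Icc (0:ℝ) T, |t - s| < 1 →
      ∫ ω, (X t (h t) ω - X s (h s) ω) ^ 2 ≤ C * |t - s| ^ (2 * a) :=
  stmt6_general a b T beta ha h hrange L hHolder hsup X hL2 g hg hmoment1 C_T hmoment2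
end

section
/- Let h : [0,T] → (1/2,1) and R(s) = s^{2h(s)} for s > 0, R(0)=0. If h is Lipschitz on [0,T], then R is of bounded variation on [0,T]. -/
/-!
With `a = 2h` Lipschitz and valued in `[1, 2]`, write `R(s) = F(s, a(s))` with `F(x, p) = x ^ p`.
On `[0, T] × [1, 2]` the map `F` is Lipschitz in `x` uniformly in `p` (as `p ≥ 1`, its
`x`-derivative `p x^(p-1)` is bounded) and Lipschitz in `p` uniformly in `x` (its `p`-derivative
`x^p log x` is bounded, `x^p |log x| ≤ x |log x| ≤ 1` near `0`). Hence `R` is Lipschitz on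
`[0, T]`, and a Lipschitz function on an interval has bounded variation.
-/

open Set Real
open scoped NNReal

theorem LipschitzOnWith.apply_of_separately {α β γ : Type*} [PseudoEMetricSpace α]
    [PseudoEMetricSpace β] [PseudoEMetricSpace γ] {F : α → β → γ} {g : α → β} {s : Set α}
    {t : Set β} {K₁ K₂ Kg : ℝ≥0} (hg : LipschitzOnWith Kg g s) (hgst : MapsTo g s t)
    (hF₁ : ∀ y ∈ t, LipschitzOnWith K₁ (F · y) s) (hF₂ : ∀ x ∈ s, LipschitzOnWith K₂ (F x) t) :
    LipschitzOnWith (K₁ + K₂ * Kg) (fun x => F x (g x)) s := by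
  intro x hx y hy
  calc edist (F x (g x)) (F y (g y))
      ≤ edist (F x (g x)) (F y (g x)) + edist (F y (g x)) (F y (g y)) := edist_triangle _ _ _
    _ ≤ K₁ * edist x y + K₂ * (Kg * edist x y) := by
      gcongr
      · exact hF₁ _ (hgst hx) hx hy
      · exact (hF₂ y hy (hgst hx) (hgst hy)).trans (by gcongr; exact hg hx hy)
    _ = (K₁ + K₂ * Kg) * edist x y := by ring

theorem lipschitzOnWith_rpow_const_Icc {M p b : ℝ} (hp : 1 ≤ p) (hpb : p ≤ b) :
    LipschitzOnWith (b * max 1 M ^ (b - 1)).toNNReal (fun x : ℝ => x ^ p) (Icc 0 M) := by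
  refine LipschitzOnWith.of_dist_le' fun x hx y hy => ?_
  refine (convex_Icc 0 M).norm_image_sub_le_of_norm_hasDerivWithin_le
    (fun z _ => (hasDerivAt_rpow_const (Or.inr hp)).hasDerivWithinAt) (fun z hz => ?_) hy hx
  rw [norm_of_nonneg (by have := hz.1; positivity)]
  have hzM : z ^ (p - 1) ≤ max 1 M ^ (b - 1) :=
    (rpow_le_rpow hz.1 (hz.2.trans (le_max_right _ _)) (by linarith)).trans
      (rpow_le_rpow_of_exponent_le (le_max_left _ _) (by linarith))
  exact mul_le_mul hpb hzM (by have := hz.1; positivity) (by linarith)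

theorem lipschitzOnWith_const_rpow_Icc {M t b : ℝ} (ht : t ∈ Icc 0 M) :
    LipschitzOnWith (max 1 M ^ (b + 1)).toNNReal (fun p : ℝ => t ^ p) (Icc 1 b) := by
  refine LipschitzOnWith.of_dist_le' fun p hp q hq => ?_
  rcases ht.1.eq_or_lt with rfl | ht₀
  · rw [zero_rpow (by linarith [hp.1]), zero_rpow (by linarith [hq.1]), dist_self]
    positivity
  refine (convex_Icc 1 b).norm_image_sub_le_of_norm_hasDerivWithin_le
    (fun x _ => (hasStrictDerivAt_const_rpow ht₀ x).hasDerivAt.hasDerivWithinAt)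
    (fun x hx => ?_) hq hp
  have hb : 0 ≤ b + 1 := by linarith [hx.1, hx.2]
  rw [norm_eq_abs]
  rcases le_or_gt t 1 with ht₁ | ht₁
  · calc |t ^ x * log t| ≤ 1 / x := by
          rw [mul_comm]; exact (abs_log_mul_self_rpow_lt t x ht₀ ht₁ (by linarith [hx.1])).le
      _ ≤ 1 := by rw [div_le_one (by linarith [hx.1])]; exact hx.1
      _ ≤ max 1 M ^ (b + 1) := one_le_rpow (le_max_left _ _) hb
  · calc |t ^ x * log t| = t ^ x * log t := abs_of_nonneg (by have := log_nonneg ht₁.le; positivity)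
      _ ≤ t ^ b * t := mul_le_mul (rpow_le_rpow_of_exponent_le ht₁.le hx.2) (log_le_self ht₀.le)
          (log_nonneg ht₁.le) (by positivity)
      _ = t ^ (b + 1) := (rpow_add_one ht₀.ne' b).symm
      _ ≤ max 1 M ^ (b + 1) := rpow_le_rpow ht₀.le (ht.2.trans (le_max_right _ _)) hb

theorem stmt9_general (T : ℝ) (h : ℝ → ℝ)
    (hrange : ∀ u ∈ Set.Icc (0:ℝ) T, h u ∈ Set.Ioo (1/2 : ℝ) 1)
    (L : NNReal) (hLip : LipschitzOnWith L h (Set.Icc 0 T)) :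
    BoundedVariationOn (fun s : ℝ => s ^ (2 * h s)) (Set.Icc 0 T) := by
  have hexp : MapsTo (fun s => 2 * h s) (Icc 0 T) (Icc 1 2) := fun s hs => by
    have := hrange s hs
    exact ⟨by linarith [this.1], by linarith [this.2]⟩
  have hR : LipschitzOnWith _ (fun s : ℝ => s ^ (2 * h s)) (Icc 0 T) :=
    ((lipschitzWith_smul (2 : ℝ)).comp_lipschitzOnWith hLip).apply_of_separately hexp
      (fun p hp => lipschitzOnWith_rpow_const_Icc hp.1 hp.2)
      (fun s hs => lipschitzOnWith_const_rpow_Icc hs)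
  exact hR.comp_boundedVariationOn (mapsTo_id _) (BoundedVariationOn.id_Icc 0 T)

theorem stmt9 (T : ℝ) (hT : 0 < T) (h : ℝ → ℝ)
    (hrange : ∀ u ∈ Set.Icc (0:ℝ) T, h u ∈ Set.Ioo (1/2 : ℝ) 1)
    (L : NNReal) (hLip : LipschitzOnWith L h (Set.Icc 0 T)) :
    BoundedVariationOn (fun s : ℝ => s ^ (2 * h s)) (Set.Icc 0 T) :=
  stmt9_general T h hrange L hLip
end

section
/- Let 1/2 < H < 1, 0 < s < t, and K_H(t,u) = u^{1/2-H}∫_u^t (y-u)^{H-3/2} y^{H-1/2} dy. Then ∫₀^s (K_H(t,u) - K_H(s,u))² du = ∫_s^t ∫_s^t |y-z|^{2H-2} (∫_1^{Ψ₁(s,y,z)} (v-1)^{1-2H} v^{H-3/2} dv) dy dz, where Ψ₁(s,y,z) = (yz - zs)/(yz - ys) if y > z and (yz - ys)/(yz - zs) if y ≤ z. -/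
/-!
Since `K_H(t,u) - K_H(s,u) = u^{1/2-H} ∫_s^t (y-u)^{H-3/2} y^{H-1/2} dy` for `u < s`, the left
side is a triple integral over `u ∈ (0,s)`, `y, z ∈ (s,t)`, and Fubini moves the `u`-integral
inside; the integrand is dominated by `u^{1-2H} g(y) g(z)` with `g(y) = (y-s)^{H-3/2} t^{H-1/2}`.
For `z < y` the Möbius substitution `v = z(y-u)/(y(z-u))` maps `(0,s)` increasingly onto
`(1, Ψ₁(s,y,z))` and gives
`(yz)^{H-1/2} ∫_0^s u^{1-2H} (y-u)^{H-3/2} (z-u)^{H-3/2} du`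
`  = (y-z)^{2H-2} ∫_1^{Ψ₁} (v-1)^{1-2H} v^{H-3/2} dv`;
the case `y < z` follows by symmetry and the diagonal `y = z` is a null set.
-/

open MeasureTheory Set

/-- `Ψ₁(s,y,z)` as in the local nondeterminism computation. -/
noncomputable def Psi1 (s y z : ℝ) : ℝ :=
  if y > z then (y*z - z*s) / (y*z - y*s) else (y*z - y*s) / (y*z - z*s)

lemma integral_integral_integral_swap {α β γ E : Type*}
    [MeasurableSpace α] [MeasurableSpace β] [MeasurableSpace γ]
    [NormedAddCommGroup E] [NormedSpace ℝ E]
    {μ : Measure α} {ν : Measure β} {ρ : Measure γ} [SFinite μ] [SFinite ν] [SFinite ρ]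
    {f : α → β → γ → E}
    (hf : Integrable (fun p : α × β × γ => f p.1 p.2.1 p.2.2) (μ.prod (ν.prod ρ))) :
    ∫ a, ∫ b, ∫ c, f a b c ∂ρ ∂ν ∂μ = ∫ b, ∫ c, ∫ a, f a b c ∂μ ∂ρ ∂ν := by
  have h_inner : ∀ᵐ a ∂μ, ∫ b, ∫ c, f a b c ∂ρ ∂ν = ∫ q, f a q.1 q.2 ∂ν.prod ρ := by
    filter_upwards [hf.prod_right_ae] with a ha
    exact (integral_prod _ ha).symm
  rw [integral_congr_ae h_inner,
    integral_integral_swap (f := fun a (q : β × γ) => f a q.1 q.2) hf,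
    integral_prod (fun q : β × γ => ∫ a, f a q.1 q.2 ∂μ) hf.integral_prod_right]

lemma sq_integral_eq_integral_integral_mul {α : Type*} [MeasurableSpace α] (μ : Measure α)
    (f : α → ℝ) : (∫ x, f x ∂μ) ^ 2 = ∫ x, ∫ y, f x * f y ∂μ ∂μ := by
  simp_rw [integral_const_mul, integral_mul_const, sq]

lemma integrableOn_sub_rpow_Ioo (c : ℝ) {e : ℝ} (he : -1 < e) (a b : ℝ) :
    IntegrableOn (fun x => (x - c) ^ e) (Ioo a b) := by
  have h :=
    (intervalIntegral.intervalIntegrable_rpow' (a := a - c) (b := b - c) he).comp_sub_right c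
  rw [sub_add_cancel, sub_add_cancel] at h
  exact h.1.mono_set Ioo_subset_Ioc_self

lemma integrableOn_rpow_Ioo {e : ℝ} (he : -1 < e) (a b : ℝ) :
    IntegrableOn (fun x => x ^ e) (Ioo a b) := by
  simpa using integrableOn_sub_rpow_Ioo 0 he a b

noncomputable def fbmIntegrand (H u y : ℝ) : ℝ := (y - u) ^ (H - 3/2) * y ^ (H - 1/2)

lemma integrableOn_fbmIntegrand {H : ℝ} (hH : 1/2 < H) (u a b : ℝ) :
    IntegrableOn (fbmIntegrand H u) (Ioo a b) :=
  (integrableOn_sub_rpow_Ioo u (by linarith) a b).mul_continuousOn_of_subset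
    (Real.continuous_rpow_const (by linarith)).continuousOn measurableSet_Ioo isCompact_Icc
    Ioo_subset_Icc_self

lemma fbmIntegrand_nonneg (H : ℝ) {u y : ℝ} (huy : u < y) (hy : 0 ≤ y) :
    0 ≤ fbmIntegrand H u y :=
  mul_nonneg (Real.rpow_nonneg (sub_pos.2 huy).le _) (Real.rpow_nonneg hy _)

lemma fbmIntegrand_le {H u s y t : ℝ} (hH : 1/2 ≤ H) (hH' : H ≤ 3/2) (hus : u ≤ s)
    (hsy : s < y) (hy : 0 ≤ y) (hyt : y ≤ t) :
    fbmIntegrand H u y ≤ (y - s) ^ (H - 3/2) * t ^ (H - 1/2) :=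
  mul_le_mul (Real.rpow_le_rpow_of_nonpos (sub_pos.2 hsy) (by linarith) (by linarith))
    (Real.rpow_le_rpow hy hyt (by linarith)) (Real.rpow_nonneg hy _)
    (Real.rpow_nonneg (sub_pos.2 hsy).le _)

lemma K_sub_K {H u s t : ℝ} (hH : 1/2 < H) (hus : u < s) (hst : s ≤ t) :
    K H t u - K H s u = u ^ (1/2 - H) * ∫ y in Ioo s t, fbmIntegrand H u y := by
  have hsplit : ∫ y in Ioo u t, fbmIntegrand H u y
      = (∫ y in Ioo u s, fbmIntegrand H u y) + ∫ y in Ioo s t, fbmIntegrand H u y := by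
    rw [← Ioo_union_Ico_eq_Ioo hus hst, setIntegral_union
      ((Iio_disjoint_Ici le_rfl).mono Ioo_subset_Iio_self Ico_subset_Ici_self) measurableSet_Ico
      (integrableOn_fbmIntegrand hH u u s)
      ((integrableOn_Ico_iff_integrableOn_Ioo).2 (integrableOn_fbmIntegrand hH u s t)),
      integral_Ico_eq_integral_Ioo]
  change u ^ (1/2 - H) * (∫ y in Ioo u t, fbmIntegrand H u y)
    - u ^ (1/2 - H) * (∫ y in Ioo u s, fbmIntegrand H u y) = _
  rw [hsplit]
  ring

lemma sq_K_sub_K {H u s t : ℝ} (hH : 1/2 < H) (hu : 0 < u) (hus : u < s) (hst : s ≤ t) :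
    (K H t u - K H s u) ^ 2
      = ∫ y in Ioo s t, ∫ z in Ioo s t,
          u ^ (1 - 2*H) * (fbmIntegrand H u y * fbmIntegrand H u z) := by
  have hpow : (u ^ (1/2 - H)) ^ 2 = u ^ (1 - 2*H) := by
    rw [← Real.rpow_natCast, ← Real.rpow_mul hu.le]
    ring_nf
  rw [K_sub_K hH hus hst, mul_pow, hpow, sq_integral_eq_integral_integral_mul]
  simp_rw [integral_const_mul]

lemma integrable_fbmIntegrand_mul_fbmIntegrand {H s t : ℝ} (hH : 1/2 < H) (hH' : H < 1)
    (hs : 0 ≤ s) :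
    Integrable (fun p : ℝ × ℝ × ℝ =>
        p.1 ^ (1 - 2*H) * (fbmIntegrand H p.1 p.2.1 * fbmIntegrand H p.1 p.2.2))
      ((volume.restrict (Ioo 0 s)).prod
        ((volume.restrict (Ioo s t)).prod (volume.restrict (Ioo s t)))) := by
  have hdom := (integrableOn_sub_rpow_Ioo s (e := H - 3/2) (by linarith) s t).mul_const
    (t ^ (H - 1/2))
  refine ((integrableOn_rpow_Ioo (e := 1 - 2*H) (by linarith) 0 s).mul_prod
    (hdom.mul_prod hdom)).mono' (by simp only [fbmIntegrand]; fun_prop) ?_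
  rw [Measure.prod_restrict, Measure.prod_restrict]
  filter_upwards
    [ae_restrict_mem (measurableSet_Ioo.prod (measurableSet_Ioo.prod measurableSet_Ioo))]
    with ⟨u, y, z⟩ ⟨⟨hu, hus⟩, ⟨hsy, hyt⟩, ⟨hsz, hzt⟩⟩
  have hy := hs.trans hsy.le
  have hz := hs.trans hsz.le
  have hky := fbmIntegrand_nonneg H (hus.trans hsy) hy
  have hkz := fbmIntegrand_nonneg H (hus.trans hsz) hz
  have hu' := Real.rpow_nonneg hu.le (1 - 2*H)
  rw [Real.norm_eq_abs, abs_of_nonneg (mul_nonneg hu' (mul_nonneg hky hkz))]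
  exact mul_le_mul_of_nonneg_left (mul_le_mul
    (fbmIntegrand_le hH.le (by linarith) hus.le hsy hy hyt.le)
    (fbmIntegrand_le hH.le (by linarith) hus.le hsz hz hzt.le) hkz
    (hky.trans (fbmIntegrand_le hH.le (by linarith) hus.le hsy hy hyt.le))) hu'

noncomputable def psiSubst (y z u : ℝ) : ℝ := z * (y - u) / (y * (z - u))

lemma psiSubst_zero {y z : ℝ} (hy : y ≠ 0) (hz : z ≠ 0) : psiSubst y z 0 = 1 := by
  rw [psiSubst, sub_zero, sub_zero, mul_comm, div_self (mul_ne_zero hy hz)]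

lemma psiSubst_sub_one {y z u : ℝ} (hy : y ≠ 0) (hzu : z - u ≠ 0) :
    psiSubst y z u - 1 = u * (y - z) / (y * (z - u)) := by
  rw [psiSubst, div_sub_one (mul_ne_zero hy hzu)]
  ring_nf

lemma Psi1_eq_psiSubst {s y z : ℝ} (hzy : z < y) : Psi1 s y z = psiSubst y z s := by
  rw [Psi1, if_pos hzy, psiSubst]
  ring_nf

lemma Psi1_comm (s y z : ℝ) : Psi1 s y z = Psi1 s z y := by
  rcases lt_trichotomy y z with h | rfl | h
  · rw [Psi1, Psi1, if_neg h.not_gt, if_pos h]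
    ring_nf
  · rfl
  · rw [Psi1, Psi1, if_pos h, if_neg h.not_gt]
    ring_nf

lemma hasDerivAt_psiSubst {y z u : ℝ} (hy : y ≠ 0) (hzu : z - u ≠ 0) :
    HasDerivAt (psiSubst y z) (z * (y - z) / (y * (z - u) ^ 2)) u := by
  have hnum : HasDerivAt (fun x => z * (y - x)) (-z) u := by
    simpa using ((hasDerivAt_id u).const_sub y).const_mul z
  have hden : HasDerivAt (fun x => y * (z - x)) (-y) u := by
    simpa using ((hasDerivAt_id u).const_sub z).const_mul y
  refine (hnum.div hden (mul_ne_zero hy hzu)).congr_deriv ?_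
  rw [div_eq_div_iff (pow_ne_zero 2 (mul_ne_zero hy hzu)) (mul_ne_zero hy (pow_ne_zero 2 hzu))]
  ring

lemma strictMonoOn_psiSubst {y z : ℝ} (hz : 0 < z) (hzy : z < y) :
    StrictMonoOn (psiSubst y z) (Iio z) := by
  have hderiv : ∀ u ∈ Iio z, HasDerivAt (psiSubst y z) (z * (y - z) / (y * (z - u) ^ 2)) u :=
    fun u hu => hasDerivAt_psiSubst (by linarith) (sub_ne_zero.2 (ne_of_gt hu))
  refine strictMonoOn_of_deriv_pos (convex_Iio z)
    (fun u hu => (hderiv u hu).continuousAt.continuousWithinAt) fun u hu => ?_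
  rw [interior_Iio] at hu
  rw [(hderiv u hu).deriv]
  have : 0 < z - u := sub_pos.2 hu
  have : 0 < y - z := sub_pos.2 hzy
  have : 0 < y := hz.trans hzy
  positivity

lemma psiSubst_image_Ioo {s y z : ℝ} (hs : 0 ≤ s) (hsz : s < z) (hzy : z < y) :
    psiSubst y z '' Ioo 0 s = Ioo 1 (psiSubst y z s) := by
  have hz : 0 < z := hs.trans_lt hsz
  have hsub : Icc 0 s ⊆ Iio z := fun u hu => hu.2.trans_lt hsz
  have hmono := (strictMonoOn_psiSubst hz hzy).mono hsub
  have hcont : ContinuousOn (psiSubst y z) (Icc 0 s) := fun u hu =>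
    (hasDerivAt_psiSubst (hz.trans hzy).ne'
      (sub_ne_zero.2 (hsub hu).ne')).continuousAt.continuousWithinAt
  rw [hcont.image_Ioo_of_strictMonoOn hs hmono, psiSubst_zero (hz.trans hzy).ne' hz.ne']

lemma abs_deriv_mul_integrand_psiSubst (H : ℝ) {u y z : ℝ} (hu : 0 < u) (huz : u < z)
    (hzy : z < y) :
    |z * (y - z) / (y * (z - u) ^ 2)|
        * ((psiSubst y z u - 1) ^ (1 - 2*H) * psiSubst y z u ^ (H - 3/2))
      = (y - z) ^ (2 - 2*H) * (u ^ (1 - 2*H) * (fbmIntegrand H u y * fbmIntegrand H u z)) := by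
  have hz : 0 < z := hu.trans huz
  have hy : 0 < y := hz.trans hzy
  have hzu : 0 < z - u := sub_pos.2 huz
  have hyu : 0 < y - u := by linarith
  have hyz : 0 < y - z := sub_pos.2 hzy
  rw [psiSubst_sub_one hy.ne' hzu.ne', psiSubst, fbmIntegrand, fbmIntegrand,
    abs_of_pos (by positivity),
    Real.rpow_def_of_pos (show (0:ℝ) < u * (y - z) / (y * (z - u)) by positivity),
    Real.rpow_def_of_pos (show (0:ℝ) < z * (y - u) / (y * (z - u)) by positivity),
    Real.rpow_def_of_pos hyz, Real.rpow_def_of_pos hy, Real.rpow_def_of_pos hz,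
    Real.rpow_def_of_pos hu, Real.rpow_def_of_pos hyu, Real.rpow_def_of_pos hzu,
    ← Real.exp_log (show 0 < z * (y - z) / (y * (z - u) ^ 2) by positivity)]
  simp only [← Real.exp_add]
  congr 1
  simp (disch := positivity) only [Real.log_mul, Real.log_div, Real.log_pow]
  push_cast
  ring

lemma integral_Ioo_one_psiSubst (H : ℝ) {s y z : ℝ} (hs : 0 ≤ s) (hsz : s < z) (hzy : z < y) :
    ∫ v in Ioo 1 (psiSubst y z s), (v - 1) ^ (1 - 2*H) * v ^ (H - 3/2)
      = (y - z) ^ (2 - 2*H)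
          * ∫ u in Ioo 0 s, u ^ (1 - 2*H) * (fbmIntegrand H u y * fbmIntegrand H u z) := by
  have hz : 0 < z := hs.trans_lt hsz
  have hsub : Ioo 0 s ⊆ Iio z := fun u hu => hu.2.trans hsz
  rw [← psiSubst_image_Ioo hs hsz hzy,
    integral_image_eq_integral_abs_deriv_smul measurableSet_Ioo
      (fun u hu => (hasDerivAt_psiSubst (hz.trans hzy).ne'
        (sub_ne_zero.2 (hsub hu).ne')).hasDerivWithinAt)
      ((strictMonoOn_psiSubst hz hzy).injOn.mono hsub),
    ← integral_const_mul]
  exact setIntegral_congr_fun measurableSet_Ioo fun u hu =>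
    abs_deriv_mul_integrand_psiSubst H hu.1 (hu.2.trans hsz) hzy

lemma abs_sub_rpow_mul_integral_Psi1 (H : ℝ) {s y z : ℝ} (hs : 0 ≤ s) (hsy : s < y)
    (hsz : s < z) (hyz : y ≠ z) :
    |y - z| ^ (2*H - 2) * ∫ v in Ioo 1 (Psi1 s y z), (v - 1) ^ (1 - 2*H) * v ^ (H - 3/2)
      = ∫ u in Ioo 0 s, u ^ (1 - 2*H) * (fbmIntegrand H u y * fbmIntegrand H u z) := by
  wlog hzy : z < y generalizing y z
  · rw [Psi1_comm, abs_sub_comm, this hsz hsy hyz.symm (lt_of_le_of_ne (not_lt.1 hzy) hyz)]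
    simp_rw [mul_comm (fbmIntegrand H _ z)]
  have hyz' : 0 < y - z := sub_pos.2 hzy
  rw [Psi1_eq_psiSubst hzy, integral_Ioo_one_psiSubst H hs hsz hzy, abs_of_pos hyz', ← mul_assoc,
    ← Real.rpow_add hyz', show 2*H - 2 + (2 - 2*H) = 0 by ring, Real.rpow_zero, one_mul]

theorem stmt13 (H s t : ℝ) (h1 : 1/2 < H) (h2 : H < 1) (hs : 0 < s) (hst : s < t) :
    ∫ u in Set.Ioo (0:ℝ) s, (K H t u - K H s u) ^ 2 =
      ∫ y in Set.Ioo s t, ∫ z in Set.Ioo s t,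
        |y - z| ^ (2*H - 2) *
          ∫ v in Set.Ioo (1:ℝ) (Psi1 s y z), (v - 1) ^ (1 - 2*H) * v ^ (H - 3/2) := by
  calc ∫ u in Ioo 0 s, (K H t u - K H s u) ^ 2
      = ∫ u in Ioo 0 s, ∫ y in Ioo s t, ∫ z in Ioo s t,
          u ^ (1 - 2*H) * (fbmIntegrand H u y * fbmIntegrand H u z) :=
        setIntegral_congr_fun measurableSet_Ioo fun u hu => sq_K_sub_K h1 hu.1 hu.2 hst.le
    _ = ∫ y in Ioo s t, ∫ z in Ioo s t, ∫ u in Ioo 0 s,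
          u ^ (1 - 2*H) * (fbmIntegrand H u y * fbmIntegrand H u z) :=
        integral_integral_integral_swap (integrable_fbmIntegrand_mul_fbmIntegrand h1 h2 hs.le)
    _ = _ := by
      refine setIntegral_congr_fun measurableSet_Ioo fun y hy => ?_
      refine setIntegral_congr_ae measurableSet_Ioo ?_
      filter_upwards [Measure.ae_ne volume y] with z hzy hz
      exact (abs_sub_rpow_mul_integral_Psi1 H hs.le hy.1 hz.1 hzy.symm).symm
end

section
/- Let 1/2 < H < 1, t > 0, and c_H² = 2πH(H-1/2)³/(Γ(2-2H)Γ(H+1/2)² sin(π(H-1/2))). Then ∫₀^t K_H(t,u)² du = t^{2H}/c_H², where K_H(t,u) = u^{1/2-H}∫_u^t (y-u)^{H-3/2} y^{H-1/2} dy. -/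
open MeasureTheory Set Real

/-- The normalizing constant `c_H²` of the Volterra representation of fBm. -/
noncomputable def cSq (H : ℝ) : ℝ :=
  2 * π * H * (H - 1/2)^3 /
    (Real.Gamma (2 - 2*H) * Real.Gamma (H + 1/2)^2 * Real.sin (π * (H - 1/2)))

/-!
Write `g_u(y) = (y - u)^(H - 3/2) y^(H - 1/2)`, so that `K(t,u)² = u^(1-2H) (∫_u^t g_u)²`.
Expanding the square and exchanging the order of integration (Tonelli, in `ℝ≥0∞`, so no
integrability is needed) gives
`∫₀ᵗ K² = ∫₀ᵗ∫₀ᵗ ∫₀^{min y z} u^(1-2H) g_u(y) g_u(z) du dy dz`.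
For `y < z` the Möbius substitution `u = yz(1-s)/(z-ys)` maps `(0,1)` onto `(0,y)` and turns
the inner integral into `B(H-1/2, 2-2H) |y-z|^(2H-2)`. Integrating `|y-z|^(2H-2)` over the
square gives `t^(2H)/(H(2H-1))`, and the reflection formula
`Γ(H-1/2) Γ(3/2-H) = π / sin(π(H-1/2))` identifies the constant with `1/c_H²`.
-/

open ProbabilityTheory
open scoped ENNReal

lemma lintegral_rpow_mul_one_sub_rpow {α β : ℝ} (hα : 0 < α) (hβ : 0 < β) :
    ∫⁻ x in Ioo (0:ℝ) 1, ENNReal.ofReal (x ^ (α - 1) * (1 - x) ^ (β - 1))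
      = ENNReal.ofReal (beta α β) := by
  have hB := beta_pos hα hβ
  have h := lintegral_betaPDF_eq_one hα hβ
  simp_rw [lintegral_betaPDF, mul_assoc, ENNReal.ofReal_mul (one_div_pos.2 hB).le] at h
  rw [lintegral_const_mul' _ _ ENNReal.ofReal_ne_top] at h
  calc _ = ENNReal.ofReal (beta α β * (1 / beta α β))
          * ∫⁻ x in Ioo (0:ℝ) 1, ENNReal.ofReal (x ^ (α - 1) * (1 - x) ^ (β - 1)) := by
        rw [mul_one_div_cancel hB.ne', ENNReal.ofReal_one, one_mul]
    _ = ENNReal.ofReal (beta α β) := by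
        rw [ENNReal.ofReal_mul hB.le, mul_assoc, h, mul_one]

section Mobius

noncomputable def mobiusSubst (y z s : ℝ) : ℝ := y * z * (1 - s) / (z - y * s)

variable {y z : ℝ}

lemma sub_mul_pos_of_mem_Ioo (hy : 0 < y) (hyz : y < z) {s : ℝ} (hs : s ∈ Ioo (0:ℝ) 1) :
    0 < z - y * s := by
  nlinarith [hs.2]

lemma hasDerivAt_mobiusSubst (hy : 0 < y) (hyz : y < z) {s : ℝ} (hs : s ∈ Ioo (0:ℝ) 1) :
    HasDerivAt (mobiusSubst y z) (y * z * (y - z) / (z - y * s) ^ 2) s := by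
  have hnum : HasDerivAt (fun s => y * z * (1 - s)) (-(y * z)) s := by
    simpa using ((hasDerivAt_id s).const_sub 1).const_mul (y * z)
  have hden : HasDerivAt (fun s => z - y * s) (-y) s := by
    simpa using ((hasDerivAt_id s).const_mul y).const_sub z
  have h := hnum.div hden (sub_mul_pos_of_mem_Ioo hy hyz hs).ne'
  rw [show (-(y * z) * (z - y * s) - y * z * (1 - s) * -y) / (z - y * s) ^ 2
    = y * z * (y - z) / (z - y * s) ^ 2 by ring] at h
  exact h

lemma injOn_mobiusSubst (hy : 0 < y) (hyz : y < z) : InjOn (mobiusSubst y z) (Ioo 0 1) := by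
  intro s hs s' hs' h
  rw [mobiusSubst, mobiusSubst, div_eq_div_iff (sub_mul_pos_of_mem_Ioo hy hyz hs).ne'
    (sub_mul_pos_of_mem_Ioo hy hyz hs').ne'] at h
  have hyzw : y * z * (z - y) ≠ 0 := by
    have := hy.trans hyz; have := sub_pos.2 hyz; positivity
  have : y * z * (z - y) * (s - s') = 0 := by linear_combination -h
  linarith [(mul_eq_zero.1 this).resolve_left hyzw]

lemma mobiusSubst_image (hy : 0 < y) (hyz : y < z) : mobiusSubst y z '' Ioo 0 1 = Ioo 0 y := by
  have hz : 0 < z := hy.trans hyz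
  have hzy : 0 < z - y := sub_pos.2 hyz
  ext u
  constructor
  · rintro ⟨s, hs, rfl⟩
    have hD := sub_mul_pos_of_mem_Ioo hy hyz hs
    refine ⟨div_pos (mul_pos (mul_pos hy hz) (sub_pos.2 hs.2)) hD, ?_⟩
    rw [mobiusSubst, div_lt_iff₀ hD]
    nlinarith [mul_pos (mul_pos hy hs.1) hzy]
  · rintro ⟨hu, huy⟩
    have hzu : 0 < z - u := by linarith
    refine ⟨z * (y - u) / (y * (z - u)), ⟨by positivity, ?_⟩, ?_⟩
    · rw [div_lt_one (by positivity)]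
      nlinarith [mul_pos hu hzy]
    · have hden : z - y * (z * (y - u) / (y * (z - u))) = z * (z - y) / (z - u) := by
        field_simp; ring
      rw [mobiusSubst, hden]
      field_simp
      ring

lemma abs_deriv_mul_rpow_mobiusSubst {a b c : ℝ} (habc : a + b + c = -2) (hy : 0 < y)
    (hyz : y < z) {s : ℝ} (hs : s ∈ Ioo (0:ℝ) 1) :
    |y * z * (y - z) / (z - y * s) ^ 2| * (mobiusSubst y z s ^ a * (y - mobiusSubst y z s) ^ b
        * (z - mobiusSubst y z s) ^ c)
      = y ^ (a + b + 1) * z ^ (a + c + 1) * (z - y) ^ (b + c + 1) * (s ^ b * (1 - s) ^ a) := by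
  have hz : 0 < z := hy.trans hyz
  have hzy : 0 < z - y := sub_pos.2 hyz
  have hs1 : 0 < 1 - s := sub_pos.2 hs.2
  have hD := sub_mul_pos_of_mem_Ioo hy hyz hs
  -- the powers of `z - y s` cancel exactly because `a + b + c = -2`
  have hD1 : (z - y * s) ^ a * (z - y * s) ^ b * (z - y * s) ^ c * (z - y * s) ^ 2 = 1 := by
    rw [← rpow_natCast, ← rpow_add hD, ← rpow_add hD, ← rpow_add hD, habc]; norm_num
  have e1 : y - mobiusSubst y z s = y * s * (z - y) / (z - y * s) := by
    rw [mobiusSubst]; field_simp; ring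
  have e2 : z - mobiusSubst y z s = z * (z - y) / (z - y * s) := by
    rw [mobiusSubst]; field_simp; ring
  rw [e1, e2, mobiusSubst, abs_div, abs_of_nonpos (by nlinarith [mul_pos hy hz]),
    abs_of_pos (pow_pos hD 2), neg_mul_eq_mul_neg, neg_sub,
    div_rpow (mul_pos (mul_pos hy hz) hs1).le hD.le,
    div_rpow (mul_pos (mul_pos hy hs.1) hzy).le hD.le, div_rpow (mul_pos hz hzy).le hD.le,
    mul_rpow (mul_pos hy hz).le hs1.le, mul_rpow hy.le hz.le, mul_rpow (mul_pos hy hs.1).le hzy.le,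
    mul_rpow hy.le hs.1.le, mul_rpow hz.le hzy.le,
    rpow_add hy, rpow_add hy, rpow_add hz, rpow_add hz, rpow_add hzy, rpow_add hzy,
    rpow_one, rpow_one, rpow_one]
  calc _ = y ^ a * y ^ b * y * (z ^ a * z ^ c * z) * ((z - y) ^ b * (z - y) ^ c * (z - y))
        * (s ^ b * (1 - s) ^ a)
        / ((z - y * s) ^ a * (z - y * s) ^ b * (z - y * s) ^ c * (z - y * s) ^ 2) := by
        field_simp
    _ = _ := by rw [hD1, div_one]

lemma lintegral_Ioo_rpow_mul_sub_rpow_mul_sub_rpow {a b c : ℝ} (ha : -1 < a) (hb : -1 < b)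
    (habc : a + b + c = -2) (hy : 0 < y) (hyz : y < z) :
    ∫⁻ u in Ioo 0 y, ENNReal.ofReal (u ^ a * (y - u) ^ b * (z - u) ^ c)
      = ENNReal.ofReal (y ^ (a + b + 1) * z ^ (a + c + 1) * (z - y) ^ (b + c + 1)
          * beta (b + 1) (a + 1)) := by
  have hC : 0 ≤ y ^ (a + b + 1) * z ^ (a + c + 1) * (z - y) ^ (b + c + 1) := by
    have := hy.trans hyz; have := sub_pos.2 hyz; positivity
  have hpt : ∀ s ∈ Ioo (0:ℝ) 1,
      ENNReal.ofReal |y * z * (y - z) / (z - y * s) ^ 2|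
          * ENNReal.ofReal (mobiusSubst y z s ^ a * (y - mobiusSubst y z s) ^ b
            * (z - mobiusSubst y z s) ^ c)
        = ENNReal.ofReal (y ^ (a + b + 1) * z ^ (a + c + 1) * (z - y) ^ (b + c + 1))
          * ENNReal.ofReal (s ^ (b + 1 - 1) * (1 - s) ^ (a + 1 - 1)) := fun s hs => by
    rw [← ENNReal.ofReal_mul (abs_nonneg _), abs_deriv_mul_rpow_mobiusSubst habc hy hyz hs,
      ENNReal.ofReal_mul hC, add_sub_cancel_right, add_sub_cancel_right]
  rw [← mobiusSubst_image hy hyz, lintegral_image_eq_lintegral_abs_deriv_mul measurableSet_Ioo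
      (fun s hs => (hasDerivAt_mobiusSubst hy hyz hs).hasDerivWithinAt) (injOn_mobiusSubst hy hyz),
    setLIntegral_congr_fun measurableSet_Ioo hpt, lintegral_const_mul' _ _ ENNReal.ofReal_ne_top,
    lintegral_rpow_mul_one_sub_rpow (by linarith) (by linarith),
    ← ENNReal.ofReal_mul hC]

end Mobius

lemma lintegral_lintegral_lintegral_rotate {G : ℝ → ℝ → ℝ → ℝ≥0∞}
    (hG : Measurable fun p : ℝ × ℝ × ℝ => G p.1 p.2.1 p.2.2) :
    ∫⁻ u, ∫⁻ y, ∫⁻ z, G u y z = ∫⁻ y, ∫⁻ z, ∫⁻ u, G u y z := by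
  have hG' : Measurable fun q : (ℝ × ℝ) × ℝ => G q.1.1 q.1.2 q.2 :=
    hG.comp (by fun_prop : Measurable fun q : (ℝ × ℝ) × ℝ => (q.1.1, q.1.2, q.2))
  calc ∫⁻ u, ∫⁻ y, ∫⁻ z, G u y z = ∫⁻ y, ∫⁻ u, ∫⁻ z, G u y z :=
        lintegral_lintegral_swap hG'.lintegral_prod_right'.aemeasurable
    _ = ∫⁻ y, ∫⁻ z, ∫⁻ u, G u y z := lintegral_congr fun y =>
        lintegral_lintegral_swap (hG.comp (by fun_prop :
          Measurable fun q : ℝ × ℝ => (q.1, y, q.2))).aemeasurable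

lemma lintegral_Ioo_Ioo_Ioo_swap_min {a t : ℝ} {F : ℝ → ℝ → ℝ → ℝ≥0∞}
    (hF : Measurable fun p : ℝ × ℝ × ℝ => F p.1 p.2.1 p.2.2) :
    ∫⁻ u in Ioo a t, ∫⁻ y in Ioo u t, ∫⁻ z in Ioo u t, F u y z
      = ∫⁻ y in Ioo a t, ∫⁻ z in Ioo a t, ∫⁻ u in Ioo a (min y z), F u y z := by
  let S : Set (ℝ × ℝ × ℝ) :=
    {p | a < p.1 ∧ p.1 < p.2.1 ∧ p.2.1 < t ∧ p.1 < p.2.2 ∧ p.2.2 < t}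
  have hS : MeasurableSet S := by
    simp only [S]
    measurability
  let G : ℝ → ℝ → ℝ → ℝ≥0∞ := fun u y z =>
    S.indicator (fun p => F p.1 p.2.1 p.2.2) (u, y, z)
  have hG : Measurable fun p : ℝ × ℝ × ℝ => G p.1 p.2.1 p.2.2 := hF.indicator hS
  have lhs : ∫⁻ u in Ioo a t, ∫⁻ y in Ioo u t, ∫⁻ z in Ioo u t, F u y z
      = ∫⁻ u, ∫⁻ y, ∫⁻ z, G u y z := by
    simp only [← lintegral_indicator measurableSet_Ioo, G, S, indicator_apply, mem_ofPred_eq,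
      mem_Ioo]
    refine lintegral_congr fun u => ?_
    split_ifs with hu
    · refine lintegral_congr fun y => ?_
      split_ifs with hy
      · refine lintegral_congr fun z => ?_
        split_ifs <;> grind
      · refine ((lintegral_congr fun z => if_neg fun h => hy ⟨h.2.1, h.2.2.1⟩).trans
          lintegral_zero).symm
    · refine ((lintegral_congr fun y => (lintegral_congr fun z => if_neg fun h =>
        hu ⟨h.1, h.2.1.trans h.2.2.1⟩).trans lintegral_zero).trans lintegral_zero).symm
  have rhs : ∫⁻ y in Ioo a t, ∫⁻ z in Ioo a t, ∫⁻ u in Ioo a (min y z), F u y z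
      = ∫⁻ y, ∫⁻ z, ∫⁻ u, G u y z := by
    simp only [← lintegral_indicator measurableSet_Ioo, G, S, indicator_apply, mem_ofPred_eq,
      mem_Ioo, lt_min_iff]
    refine lintegral_congr fun y => ?_
    split_ifs with hy
    · refine lintegral_congr fun z => ?_
      split_ifs with hz
      · refine lintegral_congr fun u => ?_
        split_ifs <;> grind
      · refine ((lintegral_congr fun u => if_neg fun h =>
          hz ⟨h.1.trans h.2.2.2.1, h.2.2.2.2⟩).trans lintegral_zero).symm
    · refine ((lintegral_congr fun z => (lintegral_congr fun u => if_neg fun h =>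
        hy ⟨h.1.trans h.2.1, h.2.2.1⟩).trans lintegral_zero).trans lintegral_zero).symm
  rw [lhs, rhs, lintegral_lintegral_lintegral_rotate hG]

lemma ofReal_sq_integral_eq_lintegral_lintegral {α : Type*} [MeasurableSpace α] {μ : Measure α}
    {f : α → ℝ} (hf : Integrable f μ) (hf0 : 0 ≤ᵐ[μ] f) :
    ENNReal.ofReal ((∫ x, f x ∂μ) ^ 2)
      = ∫⁻ x, ∫⁻ y, ENNReal.ofReal (f x) * ENNReal.ofReal (f y) ∂μ ∂μ := by
  have hm := hf.aemeasurable.ennreal_ofReal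
  rw [sq, ENNReal.ofReal_mul (integral_nonneg_of_ae hf0),
    ofReal_integral_eq_lintegral_ofReal hf hf0, ← lintegral_mul_const'' _ hm]
  exact lintegral_congr fun x => (lintegral_const_mul'' _ hm).symm

lemma ofReal_intervalIntegral_eq_setLIntegral_Ioo {f : ℝ → ℝ} {a b : ℝ} (hab : a ≤ b)
    (hf : IntervalIntegrable f volume a b) (hf0 : ∀ x ∈ Ioo a b, 0 ≤ f x) :
    ENNReal.ofReal (∫ x in a..b, f x) = ∫⁻ x in Ioo a b, ENNReal.ofReal (f x) := by
  rw [intervalIntegral.integral_of_le hab, integral_Ioc_eq_integral_Ioo]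
  exact ofReal_integral_eq_lintegral_ofReal
    ((intervalIntegrable_iff_integrableOn_Ioo_of_le hab).1 hf)
    (ae_restrict_of_forall_mem measurableSet_Ioo hf0)

section AbsSubRpow

variable {r t y : ℝ}

lemma abs_sub_rpow_eqOn_left : EqOn (fun z => |y - z| ^ r) (fun z => (y - z) ^ r) (Iic y) :=
  fun z hz => by simp only [abs_of_nonneg (sub_nonneg.2 (mem_Iic.1 hz))]

lemma abs_sub_rpow_eqOn_right : EqOn (fun z => |y - z| ^ r) (fun z => (z - y) ^ r) (Ici y) :=
  fun z hz => by simp only [abs_sub_comm y z, abs_of_nonneg (sub_nonneg.2 (mem_Ici.1 hz))]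

lemma intervalIntegrable_abs_sub_rpow (hr : -1 < r) (hy : y ∈ Icc 0 t) :
    IntervalIntegrable (fun z => |y - z| ^ r) volume 0 t := by
  have hl : IntervalIntegrable (fun z => (y - z) ^ r) volume 0 y := by
    simpa using
      ((intervalIntegral.intervalIntegrable_rpow' hr (a := 0) (b := y)).comp_sub_left y).symm
  have hr' : IntervalIntegrable (fun z => (z - y) ^ r) volume y t := by
    simpa using
      (intervalIntegral.intervalIntegrable_rpow' hr (a := 0) (b := t - y)).comp_sub_right y
  refine IntervalIntegrable.trans (b := y) ?_ ?_
  · refine (intervalIntegrable_congr (abs_sub_rpow_eqOn_left.mono fun z hz => ?_)).2 hl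
    rw [uIoc_of_le hy.1] at hz
    exact hz.2
  · refine (intervalIntegrable_congr (abs_sub_rpow_eqOn_right.mono fun z hz => ?_)).2 hr'
    rw [uIoc_of_le hy.2] at hz
    exact hz.1.le

lemma integral_abs_sub_rpow (hr : -1 < r) (hy : y ∈ Icc 0 t) :
    ∫ z in 0..t, |y - z| ^ r = (y ^ (r + 1) + (t - y) ^ (r + 1)) / (r + 1) := by
  have hi := intervalIntegrable_abs_sub_rpow hr hy
  have hy' : y ∈ uIcc 0 t := Icc_subset_uIcc hy
  rw [← intervalIntegral.integral_add_adjacent_intervals (b := y)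
      (hi.mono_set (uIcc_subset_uIcc_left hy')) (hi.mono_set (uIcc_subset_uIcc_right hy')),
    intervalIntegral.integral_congr (abs_sub_rpow_eqOn_left.mono fun z hz => ?_),
    intervalIntegral.integral_congr (abs_sub_rpow_eqOn_right.mono fun z hz => ?_),
    intervalIntegral.integral_comp_sub_left (fun x => x ^ r),
    intervalIntegral.integral_comp_sub_right (fun x => x ^ r),
    integral_rpow (Or.inl hr), integral_rpow (Or.inl hr)]
  · rw [sub_zero, sub_self, zero_rpow (by linarith)]
    ring
  · rw [uIcc_of_le hy.2] at hz
    exact hz.1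
  · rw [uIcc_of_le hy.1] at hz
    exact hz.2

end AbsSubRpow

lemma lintegral_Ioo_lintegral_Ioo_abs_sub_rpow {r t : ℝ} (hr : -1 < r) (ht : 0 ≤ t) :
    ∫⁻ y in Ioo 0 t, ∫⁻ z in Ioo 0 t, ENNReal.ofReal (|y - z| ^ r)
      = ENNReal.ofReal (2 * t ^ (r + 2) / ((r + 1) * (r + 2))) := by
  have hr1 : -1 < r + 1 := by linarith
  have inner : ∀ y ∈ Ioo 0 t, ∫⁻ z in Ioo 0 t, ENNReal.ofReal (|y - z| ^ r)
      = ENNReal.ofReal ((y ^ (r + 1) + (t - y) ^ (r + 1)) / (r + 1)) := fun y hy => by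
    rw [← integral_abs_sub_rpow hr (Ioo_subset_Icc_self hy),
      ofReal_intervalIntegral_eq_setLIntegral_Ioo ht
        (intervalIntegrable_abs_sub_rpow hr (Ioo_subset_Icc_self hy))
        fun z _ => rpow_nonneg (abs_nonneg _) _]
  have hl : IntervalIntegrable (fun y => y ^ (r + 1)) volume 0 t :=
    intervalIntegral.intervalIntegrable_rpow' hr1
  have hr' : IntervalIntegrable (fun y => (t - y) ^ (r + 1)) volume 0 t := by
    simpa using (hl.comp_sub_left t).symm
  rw [setLIntegral_congr_fun measurableSet_Ioo inner,
    ← ofReal_intervalIntegral_eq_setLIntegral_Ioo ht ((hl.add hr').div_const _)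
      fun y hy => div_nonneg (add_nonneg (rpow_nonneg hy.1.le _)
        (rpow_nonneg (sub_nonneg.2 hy.2.le) _)) (by linarith),
    intervalIntegral.integral_div, intervalIntegral.integral_add hl hr',
    intervalIntegral.integral_comp_sub_left (fun x => x ^ (r + 1)), sub_self, sub_zero,
    integral_rpow (Or.inl hr1), zero_rpow (by linarith), show r + 1 + 1 = r + 2 by ring]
  congr 1
  field_simp
  ring

lemma integrableOn_Ioo_sub_rpow_mul_rpow {a b u t : ℝ} (ha : -1 < a) (hb : 0 ≤ b) :
    IntegrableOn (fun y => (y - u) ^ a * y ^ b) (Ioo u t) := by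
  have hsub : IntegrableOn (fun y => (y - u) ^ a) (Ioo u t) := by
    have h := (intervalIntegral.intervalIntegrable_rpow' ha (a := 0) (b := t - u)).comp_sub_right u
    simp only [zero_add, sub_add_cancel] at h
    exact (intervalIntegrable_iff.1 h).mono_set (Ioo_subset_Ioc_self.trans Ioc_subset_uIoc)
  exact hsub.mul_continuousOn_of_subset (continuousOn_id.rpow_const fun _ _ => Or.inr hb)
    measurableSet_Ioo isCompact_Icc Ioo_subset_Icc_self

lemma measurable_setIntegral_Ioo {f : ℝ → ℝ → ℝ} (hf : Measurable (Function.uncurry f))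
    (t : ℝ) :
    Measurable fun u => ∫ y in Ioo u t, f u y := by
  let S : Set (ℝ × ℝ) := {p | p.1 < p.2 ∧ p.2 < t}
  have hS : MeasurableSet S := (measurableSet_lt measurable_fst measurable_snd).inter
    (measurableSet_lt measurable_snd measurable_const)
  have h : (fun u => ∫ y in Ioo u t, f u y)
      = fun u => ∫ y, S.indicator (Function.uncurry f) (u, y) := by
    funext u
    rw [← integral_indicator measurableSet_Ioo]
    rfl
  rw [h]
  exact (hf.indicator hS).stronglyMeasurable.integral_prod_right'.measurable

lemma measurable_K (H t : ℝ) : Measurable (K H t) :=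
  (measurable_id.pow_const _).mul (measurable_setIntegral_Ioo (by fun_prop) t)

lemma ofReal_K_sq {H t u : ℝ} (hH : 1/2 < H) (hu : 0 ≤ u) :
    ENNReal.ofReal (K H t u ^ 2) = ∫⁻ y in Ioo u t, ∫⁻ z in Ioo u t,
      ENNReal.ofReal (u ^ (1 - 2*H)) * (ENNReal.ofReal ((y - u) ^ (H - 3/2) * y ^ (H - 1/2))
        * ENNReal.ofReal ((z - u) ^ (H - 3/2) * z ^ (H - 1/2))) := by
  have hsq : K H t u ^ 2
      = u ^ (1 - 2*H) * (∫ y in Ioo u t, (y - u) ^ (H - 3/2) * y ^ (H - 1/2)) ^ 2 := by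
    rw [K, mul_pow, ← rpow_natCast (u ^ _), ← rpow_mul hu,
      show (1/2 - H) * ((2 : ℕ) : ℝ) = 1 - 2*H by push_cast; ring]
  have hnonneg : 0 ≤ᵐ[volume.restrict (Ioo u t)] fun y => (y - u) ^ (H - 3/2) * y ^ (H - 1/2) :=
    ae_restrict_of_forall_mem measurableSet_Ioo fun y hy =>
      mul_nonneg (rpow_nonneg (sub_nonneg.2 hy.1.le) _) (rpow_nonneg (hu.trans hy.1.le) _)
  rw [hsq, ENNReal.ofReal_mul (rpow_nonneg hu _), ofReal_sq_integral_eq_lintegral_lintegral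
    (integrableOn_Ioo_sub_rpow_mul_rpow (by linarith) (by linarith)) hnonneg,
    ← lintegral_const_mul' _ _ ENNReal.ofReal_ne_top]
  exact lintegral_congr fun y => (lintegral_const_mul' _ _ ENNReal.ofReal_ne_top).symm

lemma lintegral_Ioo_min_volterra {H y z : ℝ} (h1 : 1/2 < H) (h2 : H < 1) (hy : 0 < y)
    (hz : 0 < z) (hyz : y ≠ z) :
    ∫⁻ u in Ioo 0 (min y z), ENNReal.ofReal (u ^ (1 - 2*H))
        * (ENNReal.ofReal ((y - u) ^ (H - 3/2) * y ^ (H - 1/2))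
          * ENNReal.ofReal ((z - u) ^ (H - 3/2) * z ^ (H - 1/2)))
      = ENNReal.ofReal (beta (H - 1/2) (2 - 2*H) * |y - z| ^ (2*H - 2)) := by
  wlog hlt : y < z generalizing y z
  · rw [min_comm, abs_sub_comm, ← this hz hy hyz.symm (lt_of_le_of_ne (not_lt.1 hlt) hyz.symm)]
    exact lintegral_congr fun u => by ring
  have hpt : ∀ u ∈ Ioo 0 y, ENNReal.ofReal (u ^ (1 - 2*H))
        * (ENNReal.ofReal ((y - u) ^ (H - 3/2) * y ^ (H - 1/2))
          * ENNReal.ofReal ((z - u) ^ (H - 3/2) * z ^ (H - 1/2)))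
      = ENNReal.ofReal (y ^ (H - 1/2) * z ^ (H - 1/2))
        * ENNReal.ofReal (u ^ (1 - 2*H) * (y - u) ^ (H - 3/2) * (z - u) ^ (H - 3/2)) := by
    intro u hu
    have hyu : 0 ≤ y - u := sub_nonneg.2 hu.2.le
    have hzu : 0 ≤ z - u := by linarith [hu.2]
    rw [ENNReal.ofReal_mul (rpow_nonneg hyu _), ENNReal.ofReal_mul (rpow_nonneg hzu _),
      ENNReal.ofReal_mul (rpow_nonneg hy.le _),
      ENNReal.ofReal_mul (mul_nonneg (rpow_nonneg hu.1.le _) (rpow_nonneg hyu _)),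
      ENNReal.ofReal_mul (rpow_nonneg hu.1.le _)]
    ring
  rw [min_eq_left hlt.le, setLIntegral_congr_fun measurableSet_Ioo hpt,
    lintegral_const_mul' _ _ ENNReal.ofReal_ne_top,
    lintegral_Ioo_rpow_mul_sub_rpow_mul_sub_rpow (by linarith) (by linarith) (by ring) hy hlt,
    ← ENNReal.ofReal_mul (by positivity), abs_sub_comm, abs_of_pos (sub_pos.2 hlt),
    show 1 - 2*H + (H - 3/2) + 1 = -(H - 1/2) by ring, show H - 3/2 + 1 = H - 1/2 by ring,
    show H - 3/2 + (H - 3/2) + 1 = 2*H - 2 by ring, show 1 - 2*H + 1 = 2 - 2*H by ring,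
    rpow_neg hy.le, rpow_neg hz.le]
  congr 1
  field_simp

lemma lintegral_ofReal_K_sq {H t : ℝ} (h1 : 1/2 < H) (h2 : H < 1) (ht : 0 ≤ t) :
    ∫⁻ u in Ioo 0 t, ENNReal.ofReal (K H t u ^ 2)
      = ENNReal.ofReal (beta (H - 1/2) (2 - 2*H) * (2 * t ^ (2*H) / ((2*H - 1) * (2*H)))) := by
  have hB : 0 ≤ beta (H - 1/2) (2 - 2*H) := (beta_pos (by linarith) (by linarith)).le
  calc _ = ∫⁻ y in Ioo 0 t, ∫⁻ z in Ioo 0 t,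
        ENNReal.ofReal (beta (H - 1/2) (2 - 2*H)) * ENNReal.ofReal (|y - z| ^ (2*H - 2)) := by
        rw [setLIntegral_congr_fun measurableSet_Ioo fun u hu => ofReal_K_sq h1 hu.1.le,
          lintegral_Ioo_Ioo_Ioo_swap_min (by fun_prop)]
        refine setLIntegral_congr_fun measurableSet_Ioo fun y hy => lintegral_congr_ae ?_
        filter_upwards [ae_restrict_mem measurableSet_Ioo, Measure.ae_ne _ y] with z hz hzy
        rw [lintegral_Ioo_min_volterra h1 h2 hy.1 hz.1 hzy.symm, ENNReal.ofReal_mul hB]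
    _ = _ := by
        simp_rw [lintegral_const_mul' _ _ ENNReal.ofReal_ne_top]
        rw [lintegral_Ioo_lintegral_Ioo_abs_sub_rpow (by linarith) ht, ← ENNReal.ofReal_mul hB]
        ring_nf

lemma beta_mul_eq_div_cSq {H : ℝ} (h1 : 1/2 < H) (h2 : H < 1) (x : ℝ) :
    beta (H - 1/2) (2 - 2*H) * (2 * x / ((2*H - 1) * (2*H))) = x / cSq H := by
  have hS : 0 < sin (π * (H - 1/2)) :=
    sin_pos_of_pos_of_lt_pi (by nlinarith [pi_pos]) (by nlinarith [pi_pos])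
  have hG : 0 < Gamma (H - 1/2) := Gamma_pos_of_pos (by linarith)
  have hG' : 0 < Gamma (2 - 2*H) := Gamma_pos_of_pos (by linarith)
  have hrefl : Gamma (H - 1/2) * Gamma (3/2 - H) = π / sin (π * (H - 1/2)) := by
    rw [← Gamma_mul_Gamma_one_sub]; ring_nf
  have hsucc : Gamma (H + 1/2) = (H - 1/2) * Gamma (H - 1/2) := by
    rw [← Gamma_add_one (by linarith)]; ring_nf
  have hG3 : Gamma (3/2 - H) = π / sin (π * (H - 1/2)) / Gamma (H - 1/2) := by
    rw [← hrefl, mul_div_cancel_left₀ _ hG.ne']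
  rw [beta, cSq, hsucc, show H - 1/2 + (2 - 2*H) = 3/2 - H by ring, hG3]
  have : H - 1/2 ≠ 0 := by linarith
  field_simp

theorem stmt19 (H t : ℝ) (h1 : 1/2 < H) (h2 : H < 1) (ht : 0 < t) :
    ∫ u in Set.Ioo (0:ℝ) t, (K H t u) ^ 2 = t ^ (2*H) / cSq H := by
  have hB : 0 < beta (H - 1/2) (2 - 2*H) := beta_pos (by linarith) (by linarith)
  rw [integral_eq_lintegral_of_nonneg_ae (ae_of_all _ fun u => sq_nonneg _)
      ((measurable_K H t).pow_const 2).aestronglyMeasurable,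
    lintegral_ofReal_K_sq h1 h2 ht.le, ENNReal.toReal_ofReal, beta_mul_eq_div_cSq h1 h2]
  have : 0 < 2*H - 1 := by linarith
  positivity
end
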